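/- arXiv:math/0307357 — 10 statements merged into one kernel-verified Lean document; each statement's English description precedes it below -/
import Mathlib

section
/- Let M be a real m×n matrix and let μ be an optimal k₁-assignment and ν an optimal k₂-assignment with k₁ ≤ k₂ ≤ min(m,n). If δ' ⊆ μ △ ν is a union of connected components of the symmetric difference δ = μ △ ν (under the adjacency relation of sharing a row or column), and δ' contains equally many sites from μ and from ν, then μ △ δ' is a k₁-assignment and ν △ δ' is a k₂-assignment, and cost(μ ∩ δ') = cost(ν ∩ δ'). -/
open Finset
open scoped symmDiff

variable {m n : ℕ}

/-- A set of sites is independent (an assignment) if no two of its sites share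
a row or a column. -/
def Indep (π : Finset (Fin m × Fin n)) : Prop :=
  ∀ p ∈ π, ∀ q ∈ π, p ≠ q → p.1 ≠ q.1 ∧ p.2 ≠ q.2

/-- The cost of a set of sites in the matrix `M`. -/
def cost (M : Fin m → Fin n → ℝ) (π : Finset (Fin m × Fin n)) : ℝ :=
  ∑ p ∈ π, M p.1 p.2

/-- `π` is an optimal `k`-assignment in `M`. -/
def IsOptAssign (M : Fin m → Fin n → ℝ) (k : ℕ) (π : Finset (Fin m × Fin n)) : Prop :=
  Indep π ∧ π.card = k ∧
    ∀ σ : Finset (Fin m × Fin n), Indep σ → σ.card = k → cost M π ≤ cost M σ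

/-- The set of files consisting of the rows `X` and the columns `Y` covers `Z`. -/
def Covers (X : Finset (Fin m)) (Y : Finset (Fin n)) (Z : Finset (Fin m × Fin n)) : Prop :=
  ∀ p ∈ Z, p.1 ∈ X ∨ p.2 ∈ Y

/-- `(X, Y)` is a minimum-size cover of `Z`. -/
def IsOptCover (Z : Finset (Fin m × Fin n)) (X : Finset (Fin m)) (Y : Finset (Fin n)) : Prop :=
  Covers X Y Z ∧ ∀ (X' : Finset (Fin m)) (Y' : Finset (Fin n)),
    Covers X' Y' Z → X.card + Y.card ≤ X'.card + Y'.card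

/-- Two sites are adjacent if they are distinct and share a row or a column. -/
def Adj (p q : Fin m × Fin n) : Prop :=
  p ≠ q ∧ (p.1 = q.1 ∨ p.2 = q.2)

lemma symmDiff_eq_aux {μ ν δ' : Finset (Fin m × Fin n)} (hsub : δ' ⊆ μ ∆ ν) :
    μ ∆ δ' = (μ \ δ') ∪ (δ' ∩ ν) := by
  ext p
  simp only [Finset.mem_symmDiff, Finset.mem_union, Finset.mem_sdiff, Finset.mem_inter]
  constructor
  · rintro (⟨h1, h2⟩ | ⟨h1, h2⟩)
    · exact Or.inl ⟨h1, h2⟩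
    · have := hsub h1
      rw [Finset.mem_symmDiff] at this
      tauto
  · rintro (⟨h1, h2⟩ | ⟨h1, h2⟩)
    · exact Or.inl ⟨h1, h2⟩
    · have := hsub h1
      rw [Finset.mem_symmDiff] at this
      tauto

lemma indep_aux {μ ν δ' : Finset (Fin m × Fin n)}
    (hμi : Indep μ) (hνi : Indep ν) (hsub : δ' ⊆ μ ∆ ν)
    (hstep : ∀ p ∈ μ ∆ ν, ∀ q ∈ δ', Adj q p → p ∈ δ') :
    Indep (μ ∆ δ') := by
  rw [symmDiff_eq_aux hsub]
  intro p hp q hq hpq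
  by_contra hcon
  have hadj : Adj p q := by
    refine ⟨hpq, ?_⟩
    by_contra h
    push_neg at h
    exact hcon ⟨h.1, h.2⟩
  simp only [Finset.mem_union, Finset.mem_sdiff, Finset.mem_inter] at hp hq
  have key : ∀ a b : Fin m × Fin n, a ∈ μ ∧ a ∉ δ' → b ∈ δ' ∧ b ∈ ν → Adj a b → False := by
    rintro a b ⟨ha, ha'⟩ ⟨hb, hb'⟩ hab
    by_cases hav : a ∈ ν
    · have := hνi a hav b hb' hab.1
      rcases hab.2 with h | h
      · exact this.1 h
      · exact this.2 h
    · have haμν : a ∈ μ ∆ ν := Finset.mem_symmDiff.mpr (Or.inl ⟨ha, hav⟩)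
      exact ha' (hstep a haμν b hb ⟨hab.1.symm, hab.2.imp Eq.symm Eq.symm⟩)
  rcases hp with hp | hp <;> rcases hq with hq | hq
  · have := hμi p hp.1 q hq.1 hpq
    rcases hadj.2 with h | h
    · exact this.1 h
    · exact this.2 h
  · exact key p q hp hq hadj
  · exact key q p hq hp ⟨hadj.1.symm, hadj.2.imp Eq.symm Eq.symm⟩
  · have := hνi p hp.2 q hq.2 hpq
    rcases hadj.2 with h | h
    · exact this.1 h
    · exact this.2 h

/-- if `δ'` is a union of connected components of `δ = μ ∆ ν`
(i.e. closed under the transitive closure of adjacency within `δ`) containing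
equally many sites of `μ` and of `ν`, then `μ ∆ δ'` is a `k₁`-assignment,
`ν ∆ δ'` is a `k₂`-assignment, and `cost (μ ∩ δ') = cost (ν ∩ δ')`. -/
theorem component_exchange (M : Fin m → Fin n → ℝ) (k₁ k₂ : ℕ)
    (hk₁ : 1 ≤ k₁) (hk : k₁ ≤ k₂) (hk₂ : k₂ ≤ min m n)
    (μ ν : Finset (Fin m × Fin n))
    (hμ : IsOptAssign M k₁ μ) (hν : IsOptAssign M k₂ ν)
    (δ' : Finset (Fin m × Fin n)) (hsub : δ' ⊆ μ ∆ ν)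
    (hclosed : ∀ p ∈ δ', ∀ q ∈ μ ∆ ν,
      Relation.ReflTransGen (fun a b => a ∈ μ ∆ ν ∧ b ∈ μ ∆ ν ∧ Adj a b) p q → q ∈ δ')
    (hbal : (δ' ∩ μ).card = (δ' ∩ ν).card) :
    (Indep (μ ∆ δ') ∧ (μ ∆ δ').card = k₁) ∧
    (Indep (ν ∆ δ') ∧ (ν ∆ δ').card = k₂) ∧
    cost M (μ ∩ δ') = cost M (ν ∩ δ') := by
  obtain ⟨hμi, hμc, hμopt⟩ := hμ
  obtain ⟨hνi, hνc, hνopt⟩ := hν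
  have hstep : ∀ p ∈ μ ∆ ν, ∀ q ∈ δ', Adj q p → p ∈ δ' := fun p hp q hq h =>
    hclosed q hq p hp (Relation.ReflTransGen.single ⟨hsub hq, hp, h⟩)
  have hsub' : δ' ⊆ ν ∆ μ := by rwa [symmDiff_comm]
  have hstep' : ∀ p ∈ ν ∆ μ, ∀ q ∈ δ', Adj q p → p ∈ δ' := by
    rw [symmDiff_comm]; exact hstep
  have hμeq := symmDiff_eq_aux hsub
  have hνeq := symmDiff_eq_aux hsub'
  have hdisjμ : Disjoint (μ \ δ') (δ' ∩ ν) := by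
    rw [Finset.disjoint_left]
    intro a ha hb
    exact (Finset.mem_sdiff.mp ha).2 (Finset.mem_inter.mp hb).1
  have hdisjν : Disjoint (ν \ δ') (δ' ∩ μ) := by
    rw [Finset.disjoint_left]
    intro a ha hb
    exact (Finset.mem_sdiff.mp ha).2 (Finset.mem_inter.mp hb).1
  have hcardμ : (μ ∆ δ').card = k₁ := by
    rw [hμeq, Finset.card_union_of_disjoint hdisjμ]
    have h1 := Finset.card_sdiff_add_card_inter μ δ'
    have h2 : (μ ∩ δ').card = (δ' ∩ μ).card := by rw [Finset.inter_comm]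
    omega
  have hcardν : (ν ∆ δ').card = k₂ := by
    rw [hνeq, Finset.card_union_of_disjoint hdisjν]
    have h1 := Finset.card_sdiff_add_card_inter ν δ'
    have h2 : (ν ∩ δ').card = (δ' ∩ ν).card := by rw [Finset.inter_comm]
    omega
  have hindμ := indep_aux hμi hνi hsub hstep
  have hindν := indep_aux hνi hμi hsub' hstep'
  have hcostμ : cost M (μ ∆ δ') = cost M μ - cost M (δ' ∩ μ) + cost M (δ' ∩ ν) := by
    rw [hμeq]
    unfold cost
    rw [Finset.sum_union hdisjμ]
    have : ∑ p ∈ μ, M p.1 p.2 = ∑ p ∈ μ \ δ', M p.1 p.2 + ∑ p ∈ δ' ∩ μ, M p.1 p.2 := by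
      rw [Finset.inter_comm, ← Finset.sum_union (Finset.disjoint_sdiff_inter μ δ'),
        Finset.sdiff_union_inter]
    linarith
  have hcostν : cost M (ν ∆ δ') = cost M ν - cost M (δ' ∩ ν) + cost M (δ' ∩ μ) := by
    rw [hνeq]
    unfold cost
    rw [Finset.sum_union hdisjν]
    have : ∑ p ∈ ν, M p.1 p.2 = ∑ p ∈ ν \ δ', M p.1 p.2 + ∑ p ∈ δ' ∩ ν, M p.1 p.2 := by
      rw [Finset.inter_comm, ← Finset.sum_union (Finset.disjoint_sdiff_inter ν δ'),
        Finset.sdiff_union_inter]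
    linarith
  have h1 : cost M μ ≤ cost M (μ ∆ δ') := hμopt _ hindμ hcardμ
  have h2 : cost M ν ≤ cost M (ν ∆ δ') := hνopt _ hindν hcardν
  refine ⟨⟨hindμ, hcardμ⟩, ⟨hindν, hcardν⟩, ?_⟩
  rw [Finset.inter_comm μ δ', Finset.inter_comm ν δ']
  linarith
end

section
/- Let M be a real m×n matrix and k₁ ≤ k₂ ≤ min(m,n) positive integers. If μ is an optimal k₁-assignment in M, then there exists an optimal k₂-assignment μ' such that every row or column that intersects μ also intersects μ'. Moreover, if ν is an optimal k₂-assignment, then there exists an optimal k₁-assignment ν' such that every row or column intersecting ν' also intersects ν. -/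
open Finset

variable {m n : ℕ}

/-!
Let `A` be an optimal `k₁`-assignment and `B` an optimal `k₂`-assignment. Sites of `A \ B` and
`B \ A` that share a file form a bipartite graph of maximum degree two, and exchanging `A` and `B`
on any union of its components keeps both sides independent and preserves the total cost
`cost A + cost B`. By the tree bound on edges, a component holding more sites of `B` than of `A`
holds exactly one more, and every file through one of its `A`-sites then contains one of its
`B`-sites. Since `#A ≤ #B`, all other components can be exchanged, together with some of these,
without changing `#A` and `#B`; optimality of `A` and `B` forces both exchanged assignments to be
optimal again, and only components of the special kind are left in their symmetric difference.
-/

open SimpleGraph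
open scoped Classical

def SharesFile (p q : Fin m × Fin n) : Prop := p.1 = q.1 ∨ p.2 = q.2

theorem SharesFile.symm {p q : Fin m × Fin n} (h : SharesFile p q) : SharesFile q p :=
  h.imp Eq.symm Eq.symm

theorem Indep.eq_of_sharesFile {π : Finset (Fin m × Fin n)} (hπ : Indep π)
    {p q : Fin m × Fin n} (hp : p ∈ π) (hq : q ∈ π) (h : SharesFile p q) : p = q := by
  by_contra hpq
  obtain ⟨h₁, h₂⟩ := hπ p hp q hq hpq
  exact h.elim h₁ h₂

theorem indep_iff_sharesFile {π : Finset (Fin m × Fin n)} :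
    Indep π ↔ ∀ p ∈ π, ∀ q ∈ π, SharesFile p q → p = q :=
  ⟨fun h _ hp _ hq => h.eq_of_sharesFile hp hq, fun h p hp q hq hpq =>
    ⟨fun h₁ => hpq (h p hp q hq (Or.inl h₁)), fun h₂ => hpq (h p hp q hq (Or.inr h₂))⟩⟩

def FilesSubset (A B : Finset (Fin m × Fin n)) : Prop :=
  ∀ p ∈ A, (∃ q ∈ B, q.1 = p.1) ∧ (∃ q ∈ B, q.2 = p.2)

theorem FilesSubset.mono {A A' B B' : Finset (Fin m × Fin n)} (h : FilesSubset A B)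
    (hA : A' ⊆ A) (hB : B ⊆ B') : FilesSubset A' B' := fun p hp =>
  let ⟨⟨q, hq, hq₁⟩, ⟨r, hr, hr₂⟩⟩ := h p (hA hp)
  ⟨⟨q, hB hq, hq₁⟩, ⟨r, hB hr, hr₂⟩⟩

theorem FilesSubset.of_subset_union {A B S : Finset (Fin m × Fin n)} (hA : A ⊆ B ∪ S)
    (hS : FilesSubset S B) : FilesSubset A B := fun p hp =>
  (mem_union.1 (hA hp)).elim (fun hpB => ⟨⟨p, hpB, rfl⟩, ⟨p, hpB, rfl⟩⟩) (hS p)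

theorem Finset.card_filter_eq_of_card_sdiff_filter_eq {α : Type*} [DecidableEq α]
    {s t : Finset α} {p : α → Prop} [DecidablePred p]
    (h : #{x ∈ s \ t | p x} = #{x ∈ t \ s | p x}) : #{x ∈ s | p x} = #{x ∈ t | p x} := by
  have key (s t : Finset α) : #{x ∈ s \ t | p x} + #{x ∈ s ∩ t | p x} = #{x ∈ s | p x} := by
    rw [← card_union_of_disjoint (disjoint_filter_filter (disjoint_sdiff_inter s t)),
      ← filter_union, sdiff_union_inter]
  rw [← key s t, ← key t s, inter_comm, h]

theorem exists_finset_sum_eq_sum_and_lt_of_notMem {ι : Type*} [Fintype ι] (a b : ι → ℕ)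
    (hab : ∑ i, a i ≤ ∑ i, b i) (hb : ∀ i, a i < b i → b i = a i + 1) :
    ∃ U : Finset ι, ∑ i ∈ U, a i = ∑ i ∈ U, b i ∧ ∀ i ∉ U, a i < b i := by
  set L := univ.filter fun i => b i ≤ a i
  set H := univ.filter fun i => ¬b i ≤ a i
  have hL : ∑ i ∈ L, a i = ∑ i ∈ L, b i + ∑ i ∈ L, (a i - b i) := by
    rw [← sum_add_distrib]
    exact sum_congr rfl fun i hi => by have := (mem_filter.1 hi).2; omega
  have hH : ∀ W ⊆ H, ∑ i ∈ W, b i = ∑ i ∈ W, a i + #W := fun W hW => by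
    rw [card_eq_sum_ones, ← sum_add_distrib]
    exact sum_congr rfl fun i hi => hb i (not_le.1 (mem_filter.1 (hW hi)).2)
  have hsplit : ∑ i ∈ L, a i + ∑ i ∈ H, a i = ∑ i, a i := sum_filter_add_sum_filter_not _ _ _
  have hsplit' : ∑ i ∈ L, b i + ∑ i ∈ H, b i = ∑ i, b i := sum_filter_add_sum_filter_not _ _ _
  obtain ⟨W, hWH, hW⟩ := exists_subset_card_eq (s := H) (n := ∑ i ∈ L, (a i - b i))
    (by have := hH H subset_rfl; omega)
  have hLW : Disjoint L W := (disjoint_filter_filter_not _ _ _).mono_right hWH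
  refine ⟨L ∪ W, ?_, fun i hi => ?_⟩
  · rw [sum_union hLW, sum_union hLW]
    have := hH W hWH
    omega
  · exact not_le.1 fun h => hi (mem_union_left _ (mem_filter.2 ⟨mem_univ _, h⟩))

theorem SimpleGraph.card_filter_connectedComponentMk_mem {V : Type*} [Fintype V]
    [DecidableEq V] {G : SimpleGraph V} [DecidableRel G.Adj] (S : Finset V)
    (U : Finset G.ConnectedComponent) :
    #{x ∈ S | G.connectedComponentMk x ∈ U} = ∑ c ∈ U, #{x ∈ S | x ∈ c.supp} := by
  rw [card_eq_sum_card_fiberwise (s := {x ∈ S | G.connectedComponentMk x ∈ U})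
    fun x hx => (mem_filter.1 hx).2]
  refine sum_congr rfl fun c hc => congrArg card (ext fun x => ?_)
  simp only [mem_filter, ConnectedComponent.mem_supp_iff]
  constructor
  · exact fun ⟨⟨hx, _⟩, hxc⟩ => ⟨hx, hxc⟩
  · exact fun ⟨hx, hxc⟩ => ⟨⟨hx, hxc ▸ hc⟩, hxc⟩

section Exchange

variable {A B : Finset (Fin m × Fin n)} {P : Fin m × Fin n → Prop} [DecidablePred P]

theorem Indep.filter_union_filter_not (hA : Indep A) (hB : Indep B)
    (hP : ∀ p ∈ A, ∀ q ∈ B, SharesFile p q → (P p ↔ P q)) :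
    Indep ({p ∈ A | P p} ∪ {q ∈ B | ¬P q}) := by
  rw [indep_iff_sharesFile]
  simp only [mem_union, mem_filter]
  rintro p (⟨hpA, hPp⟩ | ⟨hpB, hPp⟩) q (⟨hqA, hPq⟩ | ⟨hqB, hPq⟩) hpq
  · exact hA.eq_of_sharesFile hpA hqA hpq
  · exact absurd ((hP p hpA q hqB hpq).1 hPp) hPq
  · exact absurd ((hP q hqA p hpB hpq.symm).1 hPq) hPp
  · exact hB.eq_of_sharesFile hpB hqB hpq

theorem cost_filter_union_filter_not_add (M : Fin m → Fin n → ℝ) :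
    cost M ({p ∈ A | P p} ∪ {q ∈ B | ¬P q}) + cost M ({q ∈ B | P q} ∪ {p ∈ A | ¬P p}) =
      cost M A + cost M B := by
  simp only [cost, sum_union (disjoint_filter_filter_not _ _ _)]
  rw [← sum_filter_add_sum_filter_not A P, ← sum_filter_add_sum_filter_not B P]
  ring

theorem card_filter_union_filter_not (h : #{p ∈ A | P p} = #{q ∈ B | P q}) :
    #({p ∈ A | P p} ∪ {q ∈ B | ¬P q}) = #B := by
  rw [card_union_of_disjoint (disjoint_filter_filter_not _ _ _), h,
    card_filter_add_card_filter_not]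

theorem IsOptAssign.of_cost_le {M : Fin m → Fin n → ℝ} {k : ℕ} {σ : Finset (Fin m × Fin n)}
    (hB : IsOptAssign M k B) (hσ : Indep σ) (hcard : #σ = k) (hcost : cost M σ ≤ cost M B) :
    IsOptAssign M k σ :=
  ⟨hσ, hcard, fun π hπ hπk => hcost.trans (hB.2.2 π hπ hπk)⟩

theorem IsOptAssign.exchange {M : Fin m → Fin n → ℝ} {k₁ k₂ : ℕ} (hA : IsOptAssign M k₁ A)
    (hB : IsOptAssign M k₂ B) (hP : ∀ p ∈ A, ∀ q ∈ B, SharesFile p q → (P p ↔ P q))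
    (hcard : #{p ∈ A | P p} = #{q ∈ B | P q}) :
    IsOptAssign M k₂ ({p ∈ A | P p} ∪ {q ∈ B | ¬P q}) ∧
      IsOptAssign M k₁ ({q ∈ B | P q} ∪ {p ∈ A | ¬P p}) := by
  have hσ := hA.1.filter_union_filter_not hB.1 hP
  have hτ := hB.1.filter_union_filter_not hA.1 fun q hq p hp h => (hP p hp q hq h.symm).symm
  have hσk := (card_filter_union_filter_not hcard).trans hB.2.1
  have hτk := (card_filter_union_filter_not hcard.symm).trans hA.2.1
  have hσB := hB.2.2 _ hσ hσk
  have hτA := hA.2.2 _ hτ hτk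
  have hsum := cost_filter_union_filter_not_add (P := P) (A := A) (B := B) M
  exact ⟨hB.of_cost_le hσ hσk (by linarith), hA.of_cost_le hτ hτk (by linarith)⟩

end Exchange

def exchangeGraph (A B : Finset (Fin m × Fin n)) : SimpleGraph (Fin m × Fin n) :=
  fromRel fun p q => p ∈ A ∧ q ∈ B ∧ SharesFile p q

namespace exchangeGraph

variable {A B : Finset (Fin m × Fin n)} {p q r : Fin m × Fin n}

theorem adj_of_sharesFile (hp : p ∈ A) (hq : q ∈ B) (hpq : p ≠ q) (h : SharesFile p q) :
    (exchangeGraph A B).Adj p q :=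
  ⟨hpq, Or.inl ⟨hp, hq, h⟩⟩

theorem mem_and_sharesFile_of_adj (hp : p ∉ B) (h : (exchangeGraph A B).Adj p q) :
    q ∈ B ∧ SharesFile p q := by
  obtain ⟨-, ⟨-, hq, hpq⟩ | ⟨-, hp', -⟩⟩ := h
  · exact ⟨hq, hpq⟩
  · exact absurd hp' hp

theorem eq_of_adj_of_adj (hB : Indep B) (hp : p ∉ B) (hq : (exchangeGraph A B).Adj p q)
    (hr : (exchangeGraph A B).Adj p r) (h : q.1 = p.1 ↔ r.1 = p.1) : q = r := by
  obtain ⟨hqB, hpq⟩ := mem_and_sharesFile_of_adj hp hq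
  obtain ⟨hrB, hpr⟩ := mem_and_sharesFile_of_adj hp hr
  refine hB.eq_of_sharesFile hqB hrB ?_
  by_cases hq₁ : q.1 = p.1
  · exact Or.inl (hq₁.trans (h.1 hq₁).symm)
  · exact Or.inr ((hpq.resolve_left (Ne.symm hq₁)).symm.trans
      (hpr.resolve_left fun h' => hq₁ (h.2 h'.symm)))

theorem isBipartiteWith (hB : Indep B) :
    (exchangeGraph A B).IsBipartiteWith ↑(A \ B) ↑B := by
  refine ⟨Finset.disjoint_coe.2 Finset.sdiff_disjoint, fun p q h => ?_⟩
  obtain ⟨hpq, ⟨hp, hq, hs⟩ | ⟨hq, hp, hs⟩⟩ := h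
  · refine Or.inl ⟨Finset.mem_sdiff.2 ⟨hp, fun hpB => hpq ?_⟩, hq⟩
    exact hB.eq_of_sharesFile hpB hq hs
  · refine Or.inr ⟨hp, Finset.mem_sdiff.2 ⟨hq, fun hqB => hpq ?_⟩⟩
    exact (hB.eq_of_sharesFile hqB hp hs).symm

variable (c : (exchangeGraph A B).ConnectedComponent)

theorem injOn_sharesRow (hB : Indep B) {x : c} (hx : (x : Fin m × Fin n) ∉ B) :
    Set.InjOn (fun w : c => decide ((w : Fin m × Fin n).1 = (x : Fin m × Fin n).1))
      (c.toSimpleGraph.neighborFinset x) := by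
  intro w hw w' hw' h
  simp only [mem_coe, mem_neighborFinset, decide_eq_decide] at hw hw' h
  exact Subtype.ext (eq_of_adj_of_adj hB hx hw hw' h)

theorem degree_toSimpleGraph_le_two (hB : Indep B) {x : c} (hx : (x : Fin m × Fin n) ∉ B) :
    c.toSimpleGraph.degree x ≤ 2 := by
  rw [← card_neighborFinset_eq_degree]
  simpa using card_le_card_of_injOn _ (fun _ _ => mem_univ _) (injOn_sharesRow c hB hx)

theorem filesSubset_of_degree_eq_two (hB : Indep B) {x : c} (hx : (x : Fin m × Fin n) ∉ B)
    (h : c.toSimpleGraph.degree x = 2) :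
    FilesSubset {(x : Fin m × Fin n)} {y ∈ B | y ∈ c.supp} := by
  have himage : (c.toSimpleGraph.neighborFinset x).image
      (fun w : c => decide ((w : Fin m × Fin n).1 = (x : Fin m × Fin n).1)) = univ := by
    apply eq_univ_of_card
    rw [card_image_of_injOn (injOn_sharesRow c hB hx), card_neighborFinset_eq_degree, h]
    rfl
  have hnbr : ∀ w : c, c.toSimpleGraph.Adj x w →
      (w : Fin m × Fin n) ∈ {y ∈ B | y ∈ c.supp} ∧ SharesFile (x : Fin m × Fin n) w :=
    fun w hw =>
      let ⟨hwB, hs⟩ := mem_and_sharesFile_of_adj hx hw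
      ⟨mem_filter.2 ⟨hwB, w.2⟩, hs⟩
  intro p hp
  rw [mem_singleton] at hp
  subst hp
  obtain ⟨w, hw, hrow⟩ := mem_image.1 (himage ▸ mem_univ true)
  obtain ⟨w', hw', hcol⟩ := mem_image.1 (himage ▸ mem_univ false)
  rw [mem_neighborFinset] at hw hw'
  simp only [decide_eq_true_eq, decide_eq_false_iff_not] at hrow hcol
  exact ⟨⟨w, (hnbr w hw).1, hrow⟩,
    ⟨w', (hnbr w' hw').1, ((hnbr w' hw').2.resolve_left (Ne.symm hcol)).symm⟩⟩

theorem isBipartiteWith_toSimpleGraph (hB : Indep B) :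
    c.toSimpleGraph.IsBipartiteWith ↑((A \ B).subtype (· ∈ c.supp))
      ↑(B.subtype (· ∈ c.supp)) := by
  refine ⟨?_, fun v w h => ?_⟩
  · rw [Finset.disjoint_coe, Finset.disjoint_left]
    intro v hv hv'
    rw [mem_subtype, mem_sdiff] at hv
    exact hv.2 (mem_subtype.1 hv')
  · simpa using (isBipartiteWith hB).mem_of_adj h

theorem card_eq_add_one_and_filesSubset_of_card_lt (hB : Indep B)
    (h : #{x ∈ A \ B | x ∈ c.supp} < #{y ∈ B \ A | y ∈ c.supp}) :
    #{y ∈ B \ A | y ∈ c.supp} = #{x ∈ A \ B | x ∈ c.supp} + 1 ∧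
      FilesSubset {x ∈ A \ B | x ∈ c.supp} {y ∈ B | y ∈ c.supp} := by
  set s := (A \ B).subtype (· ∈ c.supp)
  set t := B.subtype (· ∈ c.supp)
  have hbip : c.toSimpleGraph.IsBipartiteWith s t := isBipartiteWith_toSimpleGraph c hB
  have hst : #s + #t ≤ Fintype.card c := by
    rw [← card_union_of_disjoint (disjoint_coe.1 hbip.disjoint)]
    exact card_le_univ _
  -- A connected graph has at least `|c| - 1` edges; counted from `s`, there are at most `2 #s`.
  have htree : Fintype.card c ≤ ∑ v ∈ s, c.toSimpleGraph.degree v + 1 := by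
    have := c.connected_toSimpleGraph.card_vert_le_card_edgeSet_add_one
    rw [Nat.card_eq_fintype_card, Nat.card_eq_fintype_card, ← edgeFinset_card,
      ← isBipartiteWith_sum_degrees_eq_card_edges hbip] at this
    convert this using 3
  have hdeg : ∀ v ∈ s, c.toSimpleGraph.degree v ≤ 2 := fun v hv =>
    degree_toSimpleGraph_le_two c hB (mem_sdiff.1 (mem_subtype.1 hv)).2
  have hsum := sum_le_card_nsmul s _ 2 hdeg
  have hs : #s = #{x ∈ A \ B | x ∈ c.supp} := card_subtype (· ∈ c.supp) (A \ B)
  have ht : #{y ∈ B \ A | y ∈ c.supp} ≤ #t :=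
    (card_subtype (· ∈ c.supp) B).symm ▸ card_le_card (filter_subset_filter _ sdiff_subset)
  rw [smul_eq_mul] at hsum
  refine ⟨by omega, fun x hx => ?_⟩
  obtain ⟨hxAB, hxc⟩ := mem_filter.1 hx
  have hdeg_eq : ∀ v ∈ s, c.toSimpleGraph.degree v = 2 := by
    refine (sum_eq_sum_iff_of_le hdeg).1 ?_
    rw [sum_const, smul_eq_mul]
    omega
  exact filesSubset_of_degree_eq_two c hB (x := ⟨x, hxc⟩) (mem_sdiff.1 hxAB).2
    (hdeg_eq _ (mem_subtype.2 hxAB)) x (mem_singleton_self x)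

end exchangeGraph

theorem exists_isOptAssign (M : Fin m → Fin n → ℝ) {k : ℕ} (hm : k ≤ m) (hn : k ≤ n) :
    ∃ π, IsOptAssign M k π := by
  let diag : Fin k ↪ Fin m × Fin n :=
    ⟨fun i => (Fin.castLE hm i, Fin.castLE hn i),
      fun _ _ h => Fin.castLE_injective hm (congrArg Prod.fst h)⟩
  have hdiag : Indep (univ.map diag) := by
    simp only [Indep, mem_map, mem_univ, true_and]
    rintro _ ⟨i, rfl⟩ _ ⟨j, rfl⟩ hij
    have hij : i ≠ j := fun h => hij (h ▸ rfl)
    exact ⟨(Fin.castLE_injective hm).ne hij, (Fin.castLE_injective hn).ne hij⟩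
  obtain ⟨π, hπ, hmin⟩ := exists_min_image {σ | Indep σ ∧ #σ = k} (cost M)
    ⟨univ.map diag, mem_filter.2 ⟨mem_univ _, hdiag, by simp⟩⟩
  obtain ⟨-, hπi, hπk⟩ := mem_filter.1 hπ
  exact ⟨π, hπi, hπk, fun σ hσ hσk => hmin σ (mem_filter.2 ⟨mem_univ _, hσ, hσk⟩)⟩

theorem IsOptAssign.exists_filesSubset {M : Fin m → Fin n → ℝ} {k₁ k₂ : ℕ}
    {A B : Finset (Fin m × Fin n)} (hA : IsOptAssign M k₁ A) (hB : IsOptAssign M k₂ B)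
    (hk : k₁ ≤ k₂) :
    ∃ σ τ, IsOptAssign M k₂ σ ∧ IsOptAssign M k₁ τ ∧ FilesSubset A σ ∧ FilesSubset τ B := by
  have hsum (S : Finset (Fin m × Fin n)) :
      #S = ∑ c : (exchangeGraph A B).ConnectedComponent, #{x ∈ S | x ∈ c.supp} := by
    rw [← card_filter_connectedComponentMk_mem S univ, filter_true_of_mem fun _ _ => mem_univ _]
  have hAB : #(A \ B) ≤ #(B \ A) := card_sdiff_le_card_sdiff_iff.2 (hA.2.1 ▸ hB.2.1 ▸ hk)
  obtain ⟨U, hU, hheavy⟩ := exists_finset_sum_eq_sum_and_lt_of_notMem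
    (fun c : (exchangeGraph A B).ConnectedComponent => #{x ∈ A \ B | x ∈ c.supp})
    (fun c => #{y ∈ B \ A | y ∈ c.supp}) (by rwa [← hsum, ← hsum])
    fun c hc => (exchangeGraph.card_eq_add_one_and_filesSubset_of_card_lt c hB.1 hc).1
  set P := fun x => (exchangeGraph A B).connectedComponentMk x ∈ U
  have hP : ∀ p ∈ A, ∀ q ∈ B, SharesFile p q → (P p ↔ P q) := by
    intro p hp q hq h
    rcases eq_or_ne p q with rfl | hpq
    · rfl
    · simp only [P, ConnectedComponent.connectedComponentMk_eq_of_adj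
        (exchangeGraph.adj_of_sharesFile hp hq hpq h)]
  have hcard : #{p ∈ A | P p} = #{q ∈ B | P q} := by
    refine card_filter_eq_of_card_sdiff_filter_eq ?_
    rwa [card_filter_connectedComponentMk_mem, card_filter_connectedComponentMk_mem]
  obtain ⟨hσ, hτ⟩ := hA.exchange hB hP hcard
  have hcov : FilesSubset {p ∈ A \ B | ¬P p} {q ∈ B | ¬P q} := by
    intro p hp
    obtain ⟨hpAB, hPp⟩ := mem_filter.1 hp
    refine ((exchangeGraph.card_eq_add_one_and_filesSubset_of_card_lt _ hB.1
      (hheavy _ hPp)).2.mono subset_rfl ?_) p (mem_filter.2 ⟨hpAB, rfl⟩)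
    intro q hq
    obtain ⟨hqB, hqc⟩ := mem_filter.1 hq
    rw [ConnectedComponent.mem_supp_iff] at hqc
    exact mem_filter.2 ⟨hqB, by simpa [P, hqc] using hPp⟩
  refine ⟨_, _, hσ, hτ, .of_subset_union ?_ (hcov.mono subset_rfl subset_union_right),
    .of_subset_union ?_ (hcov.mono subset_rfl (filter_subset _ _))⟩ <;>
  · intro p hp
    simp only [mem_union, mem_filter, mem_sdiff] at hp ⊢
    tauto

theorem nesting_lemma_general (M : Fin m → Fin n → ℝ) (k₁ k₂ : ℕ)
    (hk : k₁ ≤ k₂) (hk₂ : k₂ ≤ min m n) :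
    (∀ μ : Finset (Fin m × Fin n), IsOptAssign M k₁ μ →
      ∃ μ' : Finset (Fin m × Fin n), IsOptAssign M k₂ μ' ∧
        ∀ p ∈ μ, (∃ q ∈ μ', q.1 = p.1) ∧ (∃ q ∈ μ', q.2 = p.2)) ∧
    (∀ ν : Finset (Fin m × Fin n), IsOptAssign M k₂ ν →
      ∃ ν' : Finset (Fin m × Fin n), IsOptAssign M k₁ ν' ∧
        ∀ p ∈ ν', (∃ q ∈ ν, q.1 = p.1) ∧ (∃ q ∈ ν, q.2 = p.2)) := by
  have hm : k₂ ≤ m := hk₂.trans (min_le_left m n)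
  have hn : k₂ ≤ n := hk₂.trans (min_le_right m n)
  refine ⟨fun μ hμ => ?_, fun ν hν => ?_⟩
  · obtain ⟨ν, hν⟩ := exists_isOptAssign M hm hn
    obtain ⟨σ, -, hσ, -, hμσ, -⟩ := hμ.exists_filesSubset hν hk
    exact ⟨σ, hσ, hμσ⟩
  · obtain ⟨μ, hμ⟩ := exists_isOptAssign M (hk.trans hm) (hk.trans hn)
    obtain ⟨-, τ, -, hτ, -, hτν⟩ := hμ.exists_filesSubset hν hk
    exact ⟨τ, hτ, hτν⟩

/-- Nesting Lemma. -/
theorem nesting_lemma (M : Fin m → Fin n → ℝ) (k₁ k₂ : ℕ)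
    (hk₁ : 1 ≤ k₁) (hk : k₁ ≤ k₂) (hk₂ : k₂ ≤ min m n) :
    (∀ μ : Finset (Fin m × Fin n), IsOptAssign M k₁ μ →
      ∃ μ' : Finset (Fin m × Fin n), IsOptAssign M k₂ μ' ∧
        ∀ p ∈ μ, (∃ q ∈ μ', q.1 = p.1) ∧ (∃ q ∈ μ', q.2 = p.2)) ∧
    (∀ ν : Finset (Fin m × Fin n), IsOptAssign M k₂ ν →
      ∃ ν' : Finset (Fin m × Fin n), IsOptAssign M k₁ ν' ∧
        ∀ p ∈ ν', (∃ q ∈ ν, q.1 = p.1) ∧ (∃ q ∈ ν, q.2 = p.2)) :=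
  nesting_lemma_general M k₁ k₂ hk hk₂
end

section
/- Let M be a nonnegative m×n real matrix, k ≤ min(m,n), and let λ be a cover of the zero entries of M of minimum size. If M has no zero-cost (k+1)-assignment, then every file in λ intersects every optimal k-assignment in M. -/
open Finset

variable {m n : ℕ}

/-- A path structure for the alternating-path argument. -/
def AltPath (i : Fin m) (X : Finset (Fin m)) (F : Fin m → Fin n)
    (π : Finset (Fin m × Fin n)) (t : ℕ) (r : ℕ → Fin m) : Prop :=
  r 0 = i ∧ (∀ s, s ≤ t → r s ∈ X) ∧
    (∀ s, s ≤ t → ∀ s', s' ≤ t → r s = r s' → s = s') ∧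
    ∀ s, s < t → (r (s+1), F (r s)) ∈ π

lemma indep_swap {σ : Finset (Fin m × Fin n)} (h : Indep σ) :
    Indep (σ.map (Equiv.prodComm (Fin m) (Fin n)).toEmbedding) := by
  intro p hp q hq hne
  rw [Finset.mem_map] at hp hq
  obtain ⟨a, ha, rfl⟩ := hp
  obtain ⟨b, hb, rfl⟩ := hq
  have hab : a ≠ b := by rintro rfl; exact hne rfl
  obtain ⟨h1, h2⟩ := h a ha b hb hab
  exact ⟨h2, h1⟩

lemma cost_swap (M : Fin m → Fin n → ℝ) (σ : Finset (Fin m × Fin n)) :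
    cost (fun j i => M i j) (σ.map (Equiv.prodComm (Fin m) (Fin n)).toEmbedding) = cost M σ := by
  rw [cost, cost, Finset.sum_map]
  rfl

theorem rows_meet (M : Fin m → Fin n → ℝ) (hM : ∀ i j, 0 ≤ M i j)
    (k : ℕ)
    (Z : Finset (Fin m × Fin n)) (hZ : ∀ p : Fin m × Fin n, p ∈ Z ↔ M p.1 p.2 = 0)
    (X : Finset (Fin m)) (Y : Finset (Fin n)) (hcov : IsOptCover Z X Y)
    (hno : ¬ ∃ π : Finset (Fin m × Fin n), Indep π ∧ π.card = k + 1 ∧ cost M π = 0)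
    (π : Finset (Fin m × Fin n)) (hπ : IsOptAssign M k π) :
    ∀ i ∈ X, ∃ p ∈ π, p.1 = i := by
  classical
  obtain ⟨hπind, hπcard, hπopt⟩ := hπ
  obtain ⟨hcovers, hmin⟩ := hcov
  intro i hiX
  by_contra hun
  push_neg at hun
  -- Hall's theorem: a system of distinct representative zero-columns for rows of X
  have hall : ∀ s : Finset {x // x ∈ X},
      s.card ≤ (s.biUnion (fun x => univ.filter (fun j => j ∉ Y ∧ M x.1 j = 0))).card := by
    intro s
    by_contra hlt
    push_neg at hlt
    set N := s.biUnion (fun x => univ.filter (fun j => j ∉ Y ∧ M x.1 j = 0)) with hN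
    set S : Finset (Fin m) := s.image Subtype.val with hS
    have hScard : S.card = s.card := card_image_of_injective _ Subtype.val_injective
    have hSX : S ⊆ X := by
      intro x hx
      obtain ⟨y, _, rfl⟩ := Finset.mem_image.mp hx
      exact y.2
    have hcov' : Covers (X \ S) (Y ∪ N) Z := by
      intro p hp
      by_cases h1 : p.1 ∈ X
      · by_cases h2 : p.1 ∈ S
        · by_cases h3 : p.2 ∈ Y
          · exact Or.inr (mem_union_left _ h3)
          · right
            apply mem_union_right
            obtain ⟨x, hx, hxv⟩ := Finset.mem_image.mp h2
            rw [hN]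
            apply Finset.mem_biUnion.mpr
            refine ⟨x, hx, Finset.mem_filter.mpr ⟨mem_univ _, h3, ?_⟩⟩
            rw [hxv]
            exact (hZ p).mp hp
        · exact Or.inl (Finset.mem_sdiff.mpr ⟨h1, h2⟩)
      · rcases hcovers p hp with h | h
        · exact absurd h h1
        · exact Or.inr (mem_union_left _ h)
    have hle := hmin _ _ hcov'
    have h1 : (X \ S).card = X.card - S.card := card_sdiff_of_subset hSX
    have h2 : (Y ∪ N).card ≤ Y.card + N.card := card_union_le _ _
    have h3 : S.card ≤ X.card := card_le_card hSX
    omega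
  obtain ⟨f, hfinj, hf⟩ :=
    (Finset.all_card_le_biUnion_card_iff_exists_injective
      (fun x : {x // x ∈ X} => univ.filter (fun j => j ∉ Y ∧ M x.1 j = 0))).mp hall
  set F : Fin m → Fin n := fun x => if h : x ∈ X then f ⟨x, h⟩ else f ⟨i, hiX⟩ with hF
  have hFprop : ∀ x, (hx : x ∈ X) → F x ∉ Y ∧ M x (F x) = 0 := by
    intro x hx
    have := hf ⟨x, hx⟩
    rw [Finset.mem_filter] at this
    have hFx : F x = f ⟨x, hx⟩ := by rw [hF]; simp [hx]
    rw [hFx]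
    exact ⟨this.2.1, this.2.2⟩
  have hFY : ∀ x ∈ X, F x ∉ Y := fun x hx => (hFprop x hx).1
  have hFz : ∀ x ∈ X, M x (F x) = 0 := fun x hx => (hFprop x hx).2
  have hFinj : ∀ x ∈ X, ∀ y ∈ X, F x = F y → x = y := by
    intro x hx y hy hxy
    have hx' : F x = f ⟨x, hx⟩ := by rw [hF]; simp [hx]
    have hy' : F y = f ⟨y, hy⟩ := by rw [hF]; simp [hy]
    rw [hx', hy'] at hxy
    exact congrArg Subtype.val (hfinj hxy)
  -- The step lemma: every alternating path can be extended
  have step : ∀ (T : ℕ) (r : ℕ → Fin m), AltPath i X F π T r →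
      ∃ r', AltPath i X F π (T+1) r' := by
    intro T r hPath
    obtain ⟨hr0, hrX, hrinj, hrπ⟩ := hPath
    set E : Finset (Fin m × Fin n) := (range (T+1)).image (fun s => (r s, F (r s))) with hE
    set Q0 : Finset (Fin m × Fin n) := (range T).image (fun s => (r (s+1), F (r s))) with hQ0
    have hEmem : ∀ p ∈ E, ∃ s, s ≤ T ∧ p = (r s, F (r s)) := by
      intro p hp
      rw [hE, Finset.mem_image] at hp
      obtain ⟨s, hs, hsp⟩ := hp
      exact ⟨s, Nat.lt_succ_iff.mp (mem_range.mp hs), hsp.symm⟩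
    have hEzero : ∀ p ∈ E, M p.1 p.2 = 0 := by
      intro p hp
      obtain ⟨s, hs, rfl⟩ := hEmem p hp
      exact hFz _ (hrX s hs)
    have hEnotπ : ∀ p ∈ E, p ∉ π := by
      intro p hp hpπ
      obtain ⟨s, hs, rfl⟩ := hEmem p hp
      rcases Nat.eq_zero_or_pos s with rfl | hs0
      · exact hun _ hpπ (by simp [hr0])
      · have hq : (r s, F (r (s-1))) ∈ π := by
          have := hrπ (s-1) (by omega)
          rwa [Nat.sub_add_cancel hs0] at this
        have heq : (r s, F (r s)) = (r s, F (r (s-1))) := by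
          by_contra hne
          exact (hπind _ hpπ _ hq hne).1 rfl
        have hcols : F (r s) = F (r (s-1)) := congrArg Prod.snd heq
        have := hrinj s hs (s-1) (by omega)
          (hFinj _ (hrX s hs) _ (hrX (s-1) (by omega)) hcols)
        omega
    have hEcard : E.card = T + 1 := by
      rw [hE, card_image_of_injOn, card_range]
      intro a ha b hb hab
      rw [Finset.mem_coe, mem_range] at ha hb
      exact hrinj a (by omega) b (by omega) (congrArg Prod.fst hab)
    have hQ0π : Q0 ⊆ π := by
      intro p hp
      rw [hQ0, Finset.mem_image] at hp
      obtain ⟨s, hs, hsp⟩ := hp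
      rw [← hsp]
      exact hrπ s (mem_range.mp hs)
    have hQ0card : Q0.card = T := by
      rw [hQ0, card_image_of_injOn, card_range]
      intro a ha b hb hab
      rw [Finset.mem_coe, mem_range] at ha hb
      have := hrinj (a+1) (by omega) (b+1) (by omega) (congrArg Prod.fst hab)
      omega
    -- generic facts about exchanged assignments
    have key : ∀ Q : Finset (Fin m × Fin n), Q ⊆ π → Q0 ⊆ Q →
        (∀ p ∈ π, p.2 = F (r T) → p ∈ Q) →
        Indep ((π \ Q) ∪ E) ∧ ((π \ Q) ∪ E).card = π.card - Q.card + (T+1) ∧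
          cost M ((π \ Q) ∪ E) = cost M (π \ Q) := by
      intro Q hQπ hQ0Q hQlast
      have hdisj : Disjoint (π \ Q) E := by
        rw [Finset.disjoint_right]
        intro p hpE hps
        exact hEnotπ p hpE (Finset.mem_sdiff.mp hps).1
      have clash : ∀ p ∈ π \ Q, ∀ q ∈ E, p.1 ≠ q.1 ∧ p.2 ≠ q.2 := by
        intro p hp q hq
        obtain ⟨hpπ, hpQ⟩ := Finset.mem_sdiff.mp hp
        obtain ⟨s, hs, rfl⟩ := hEmem q hq
        constructor
        · intro h
          rcases Nat.eq_zero_or_pos s with rfl | hs0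
          · exact hun p hpπ (by rw [h]; simp [hr0])
          · have hq' : (r s, F (r (s-1))) ∈ π := by
              have := hrπ (s-1) (by omega)
              rwa [Nat.sub_add_cancel hs0] at this
            have hpq : p = (r s, F (r (s-1))) := by
              by_contra hne'
              exact (hπind p hpπ _ hq' hne').1 (by rw [h])
            apply hpQ
            apply hQ0Q
            rw [hQ0, Finset.mem_image]
            refine ⟨s-1, mem_range.mpr (by omega), ?_⟩
            rw [Nat.sub_add_cancel hs0]
            exact hpq.symm
        · intro h
          rcases Nat.lt_or_ge s T with hsT | hsT
          · have hq' : (r (s+1), F (r s)) ∈ π := hrπ s hsT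
            have hpq : p = (r (s+1), F (r s)) := by
              by_contra hne'
              exact (hπind p hpπ _ hq' hne').2 (by rw [h])
            apply hpQ
            apply hQ0Q
            rw [hQ0, Finset.mem_image]
            exact ⟨s, mem_range.mpr hsT, hpq.symm⟩
          · have hsT' : s = T := by omega
            subst hsT'
            exact hpQ (hQlast p hpπ h)
      refine ⟨?_, ?_, ?_⟩
      · intro p hp q hq hne
        rw [Finset.mem_union] at hp hq
        rcases hp with hp | hp <;> rcases hq with hq | hq
        · exact hπind p (Finset.mem_sdiff.mp hp).1 q (Finset.mem_sdiff.mp hq).1 hne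
        · exact clash p hp q hq
        · exact (clash q hq p hp).imp Ne.symm Ne.symm
        · obtain ⟨s, hs, rfl⟩ := hEmem p hp
          obtain ⟨s', hs', rfl⟩ := hEmem q hq
          have hss' : s ≠ s' := by rintro rfl; exact hne rfl
          constructor
          · intro h
            exact hss' (hrinj s hs s' hs' h)
          · intro h
            exact hss' (hrinj s hs s' hs'
              (hFinj _ (hrX s hs) _ (hrX s' hs') h))
      · rw [card_union_of_disjoint hdisj, card_sdiff_of_subset hQπ, hEcard]
      · rw [cost, cost, Finset.sum_union hdisj, Finset.sum_eq_zero hEzero, add_zero]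
    by_cases hocc : ∃ q ∈ π, q.2 = F (r T)
    · -- the column `F (r T)` is occupied in π by `q`: extend the path
      obtain ⟨q, hqπ, hqcol⟩ := hocc
      set Q : Finset (Fin m × Fin n) := insert q Q0 with hQ
      have hQπ : Q ⊆ π := Finset.insert_subset hqπ hQ0π
      have hQlast : ∀ p ∈ π, p.2 = F (r T) → p ∈ Q := by
        intro p hpπ hp
        have hpq : p = q := by
          by_contra hne
          exact (hπind p hpπ q hqπ hne).2 (hp.trans hqcol.symm)
        rw [hpq, hQ]
        exact mem_insert_self _ _
      obtain ⟨hind, hcard, hcost⟩ := key Q hQπ (Finset.subset_insert _ _) hQlast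
      have hqQ0 : q ∉ Q0 := by
        intro hq
        rw [hQ0, Finset.mem_image] at hq
        obtain ⟨s, hs, hqs⟩ := hq
        rw [mem_range] at hs
        have hcols : F (r s) = F (r T) := by rw [← hqcol, ← hqs]
        have := hrinj s (by omega) T le_rfl
          (hFinj _ (hrX s (by omega)) _ (hrX T le_rfl) hcols)
        omega
      have hQcard : Q.card = T + 1 := by
        rw [hQ, card_insert_of_notMem hqQ0, hQ0card]
      have hTk : T + 1 ≤ k := by
        have := card_le_card hQπ
        omega
      have hcard' : ((π \ Q) ∪ E).card = k := by
        rw [hcard, hQcard, hπcard]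
        omega
      have hopt := hπopt _ hind hcard'
      rw [hcost] at hopt
      have hsplit : cost M (π \ Q) + ∑ p ∈ Q, M p.1 p.2 = cost M π := by
        rw [cost, cost]
        exact Finset.sum_sdiff hQπ
      have hQsum : ∑ p ∈ Q, M p.1 p.2 ≤ 0 := by linarith
      have hMq : M q.1 q.2 = 0 := by
        have h1 : ∀ p ∈ Q, 0 ≤ M p.1 p.2 := fun p _ => hM _ _
        have h2 := (Finset.sum_eq_zero_iff_of_nonneg h1).mp
          (le_antisymm hQsum (Finset.sum_nonneg h1))
        exact h2 q (mem_insert_self _ _)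
      have hq1X : q.1 ∈ X := by
        rcases hcovers q ((hZ q).mpr hMq) with h | h
        · exact h
        · rw [hqcol] at h
          exact absurd h (hFY _ (hrX T le_rfl))
      -- q.1 is a fresh row
      have hfresh : ∀ s, s ≤ T → q.1 ≠ r s := by
        intro s hs h
        rcases Nat.eq_zero_or_pos s with rfl | hs0
        · exact hun q hqπ (by rw [h, hr0])
        · have hq' : (r s, F (r (s-1))) ∈ π := by
            have := hrπ (s-1) (by omega)
            rwa [Nat.sub_add_cancel hs0] at this
          have hqq' : q = (r s, F (r (s-1))) := by
            by_contra hne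
            exact (hπind q hqπ _ hq' hne).1 (by rw [h])
          have hcols : F (r T) = F (r (s-1)) := by
            rw [← hqcol, hqq']
          have := hrinj T le_rfl (s-1) (by omega)
            (hFinj _ (hrX T le_rfl) _ (hrX (s-1) (by omega)) hcols)
          omega
      refine ⟨Function.update r (T+1) q.1, ?_, ?_, ?_, ?_⟩
      · rw [Function.update_of_ne (by omega : (0:ℕ) ≠ T+1), hr0]
      · intro s hs
        rcases Nat.lt_or_ge s (T+1) with h | h
        · rw [Function.update_of_ne (by omega : s ≠ T+1)]
          exact hrX s (by omega)
        · have : s = T + 1 := by omega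
          rw [this, Function.update_self]
          exact hq1X
      · intro s hs s' hs' hss
        rcases Nat.lt_or_ge s (T+1) with h | h <;> rcases Nat.lt_or_ge s' (T+1) with h' | h'
        · rw [Function.update_of_ne (by omega : s ≠ T+1),
            Function.update_of_ne (by omega : s' ≠ T+1)] at hss
          exact hrinj s (by omega) s' (by omega) hss
        · have h2 : s' = T + 1 := by omega
          rw [Function.update_of_ne (by omega : s ≠ T+1), h2, Function.update_self] at hss
          exact absurd hss.symm (hfresh s (by omega))
        · have h2 : s = T + 1 := by omega
          rw [Function.update_of_ne (by omega : s' ≠ T+1), h2, Function.update_self] at hss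
          exact absurd hss (hfresh s' (by omega))
        · omega
      · intro s hs
        rcases Nat.lt_or_ge s T with h | h
        · rw [Function.update_of_ne (by omega : s+1 ≠ T+1),
            Function.update_of_ne (by omega : s ≠ T+1)]
          exact hrπ s h
        · have : s = T := by omega
          subst this
          rw [Function.update_self, Function.update_of_ne (by omega : s ≠ s+1)]
          have : (q.1, F (r s)) = q := by
            rw [← hqcol]
          rw [this]
          exact hqπ
    · -- the column `F (r T)` is free in π: build a zero-cost (k+1)-assignment
      exfalso
      push_neg at hocc
      have hQlast : ∀ p ∈ π, p.2 = F (r T) → p ∈ Q0 :=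
        fun p hp h => absurd h (hocc p hp)
      obtain ⟨hind, hcard, hcost⟩ := key Q0 hQ0π (Finset.Subset.refl _) hQlast
      have hTk : T ≤ k := by
        have := card_le_card hQ0π
        omega
      have hcard' : ((π \ Q0) ∪ E).card = k + 1 := by
        rw [hcard, hQ0card, hπcard]
        omega
      have hle : cost M (π \ Q0) ≤ cost M π := by
        have hsplit : cost M (π \ Q0) + ∑ p ∈ Q0, M p.1 p.2 = cost M π := by
          rw [cost, cost]
          exact Finset.sum_sdiff hQ0π
        have : (0:ℝ) ≤ ∑ p ∈ Q0, M p.1 p.2 := Finset.sum_nonneg (fun p _ => hM _ _)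
        linarith
      have hzero : ∀ p ∈ π \ Q0, M p.1 p.2 = 0 := by
        intro p hp
        have hpσ : p ∈ (π \ Q0) ∪ E := Finset.mem_union_left _ hp
        have hindp : Indep (((π \ Q0) ∪ E) \ {p}) := by
          intro a ha b hb hne
          exact hind a (Finset.mem_sdiff.mp ha).1 b (Finset.mem_sdiff.mp hb).1 hne
        have hcardp : (((π \ Q0) ∪ E) \ {p}).card = k := by
          rw [card_sdiff_of_subset (Finset.singleton_subset_iff.mpr hpσ), hcard', card_singleton]
          omega
        have hopt := hπopt _ hindp hcardp
        have hcostp : cost M (((π \ Q0) ∪ E) \ {p}) =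
            cost M ((π \ Q0) ∪ E) - M p.1 p.2 := by
          rw [cost, cost, Finset.sum_sdiff_eq_sub (Finset.singleton_subset_iff.mpr hpσ),
            Finset.sum_singleton]
        rw [hcostp, hcost] at hopt
        have := hM p.1 p.2
        linarith
      have hc0 : cost M ((π \ Q0) ∪ E) = 0 := by
        rw [hcost, cost]
        exact Finset.sum_eq_zero hzero
      exact hno ⟨_, hind, hcard', hc0⟩
  have main : ∀ T, ∃ r, AltPath i X F π T r := by
    intro T
    induction T with
    | zero =>
        refine ⟨fun _ => i, rfl, fun s hs => hiX, fun s hs s' hs' _ => by omega,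
          fun s hs => by omega⟩
    | succ T ih =>
        obtain ⟨r, hr⟩ := ih
        exact step T r hr
  obtain ⟨r, hr0, hrX, hrinj, _⟩ := main m
  have hinj : Function.Injective (fun s : Fin (m+1) => r s.val) := by
    intro a b hab
    exact Fin.ext (hrinj a.val (Nat.lt_succ_iff.mp a.isLt) b.val (Nat.lt_succ_iff.mp b.isLt) hab)
  have := Fintype.card_le_of_injective _ hinj
  simp only [Fintype.card_fin] at this
  omega

/-- if `λ = (X, Y)` is a minimum-size cover of the zeros of the
nonnegative matrix `M` and `M` has no zero-cost `(k+1)`-assignment, then every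
file of the cover intersects every optimal `k`-assignment. -/
theorem optimal_cover_intersects_optimal_assignment
    (M : Fin m → Fin n → ℝ) (hM : ∀ i j, 0 ≤ M i j)
    (k : ℕ) (hk : k ≤ min m n)
    (Z : Finset (Fin m × Fin n)) (hZ : ∀ p : Fin m × Fin n, p ∈ Z ↔ M p.1 p.2 = 0)
    (X : Finset (Fin m)) (Y : Finset (Fin n)) (hcov : IsOptCover Z X Y)
    (hno : ¬ ∃ π : Finset (Fin m × Fin n), Indep π ∧ π.card = k + 1 ∧ cost M π = 0) :
    ∀ π : Finset (Fin m × Fin n), IsOptAssign M k π →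
      (∀ i ∈ X, ∃ p ∈ π, p.1 = i) ∧ (∀ j ∈ Y, ∃ p ∈ π, p.2 = j) := by
  intro π hπ
  obtain ⟨hπind, hπcard, hπopt⟩ := hπ
  constructor
  · exact rows_meet M hM k Z hZ X Y hcov hno π ⟨hπind, hπcard, hπopt⟩
  · -- transpose everything and apply `rows_meet`
    set e := Equiv.prodComm (Fin m) (Fin n) with he
    set e' := Equiv.prodComm (Fin n) (Fin m) with he'
    set M' : Fin n → Fin m → ℝ := fun j i => M i j with hM'def
    have hZ' : ∀ p : Fin n × Fin m, p ∈ Z.map e.toEmbedding ↔ M' p.1 p.2 = 0 := by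
      intro p
      rw [Finset.mem_map_equiv]
      exact hZ (e.symm p)
    have hcov' : IsOptCover (Z.map e.toEmbedding) Y X := by
      constructor
      · intro p hp
        rw [Finset.mem_map_equiv] at hp
        rcases hcov.1 _ hp with h | h
        · exact Or.inr h
        · exact Or.inl h
      · intro Y' X' hc
        have hc2 : Covers X' Y' Z := by
          intro a ha
          have hmem : e a ∈ Z.map e.toEmbedding := by
            rw [Finset.mem_map_equiv]
            simpa using ha
          rcases hc _ hmem with h | h
          · exact Or.inr h
          · exact Or.inl h
        have := hcov.2 X' Y' hc2
        omega
    have hno' : ¬ ∃ τ : Finset (Fin n × Fin m), Indep τ ∧ τ.card = k + 1 ∧ cost M' τ = 0 := by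
      rintro ⟨τ, hτi, hτc, hτ0⟩
      apply hno
      refine ⟨τ.map e'.toEmbedding, indep_swap hτi, by rw [Finset.card_map]; exact hτc, ?_⟩
      have h2 : cost M (τ.map e'.toEmbedding) = cost M' τ := cost_swap M' τ
      rw [h2]
      exact hτ0
    have hπ' : IsOptAssign M' k (π.map e.toEmbedding) := by
      refine ⟨indep_swap hπind, by rw [Finset.card_map]; exact hπcard, ?_⟩
      intro τ hτi hτc
      have h1 : cost M' (π.map e.toEmbedding) = cost M π := cost_swap M π
      have h2 : cost M (τ.map e'.toEmbedding) = cost M' τ := cost_swap M' τ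
      rw [h1, ← h2]
      exact hπopt _ (indep_swap hτi) (by rw [Finset.card_map]; exact hτc)
    have h := rows_meet M' (fun j i => hM i j) k (Z.map e.toEmbedding) hZ' Y X hcov' hno'
      (π.map e.toEmbedding) hπ'
    intro j hj
    obtain ⟨p, hp, hp1⟩ := h j hj
    rw [Finset.mem_map] at hp
    obtain ⟨a, ha, rfl⟩ := hp
    exact ⟨a, ha, hp1⟩
end

section
/- Let Z be a set of positions in an m×n grid. There exists a minimum-size cover of Z by rows and columns that contains every row belonging to some minimum-size cover of Z; similarly there is a minimum-size cover containing every column belonging to some minimum-size cover. -/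
open Finset

variable {m n : ℕ}

lemma optCover_union_inter {Z : Finset (Fin m × Fin n)} {X1 X2 : Finset (Fin m)}
    {Y1 Y2 : Finset (Fin n)} (h1 : IsOptCover Z X1 Y1) (h2 : IsOptCover Z X2 Y2) :
    IsOptCover Z (X1 ∪ X2) (Y1 ∩ Y2) ∧ IsOptCover Z (X1 ∩ X2) (Y1 ∪ Y2) := by
  have hcov : Covers (X1 ∪ X2) (Y1 ∩ Y2) Z := by
    intro p hp
    rcases h1.1 p hp with h | h
    · exact Or.inl (mem_union_left _ h)
    rcases h2.1 p hp with h' | h'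
    · exact Or.inl (mem_union_right _ h')
    · exact Or.inr (mem_inter.2 ⟨h, h'⟩)
  have hcov' : Covers (X1 ∩ X2) (Y1 ∪ Y2) Z := by
    intro p hp
    rcases h1.1 p hp with h | h
    · rcases h2.1 p hp with h' | h'
      · exact Or.inl (mem_inter.2 ⟨h, h'⟩)
      · exact Or.inr (mem_union_right _ h')
    · exact Or.inr (mem_union_left _ h)
  have e1 := card_union_add_card_inter X1 X2
  have e2 := card_union_add_card_inter Y1 Y2
  have l1 := h1.2 (X1 ∩ X2) (Y1 ∪ Y2) hcov'
  have l1' := h1.2 (X1 ∪ X2) (Y1 ∩ Y2) hcov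
  have l2 := h1.2 X2 Y2 h2.1
  have l3 := h2.2 X1 Y1 h1.1
  refine ⟨⟨hcov, fun X' Y' hc => ?_⟩, ⟨hcov', fun X' Y' hc => ?_⟩⟩ <;>
  · have := h1.2 X' Y' hc
    omega

lemma exists_optCover (Z : Finset (Fin m × Fin n)) :
    ∃ X Y, IsOptCover Z X Y := by
  classical
  obtain ⟨p, hp, hmin⟩ := Finset.exists_min_image
    ((Finset.univ : Finset (Finset (Fin m) × Finset (Fin n))).filter
      (fun p => Covers p.1 p.2 Z))
    (fun p => p.1.card + p.2.card)
    ⟨(Finset.univ, ∅), by simp [Covers]⟩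
  refine ⟨p.1, p.2, (mem_filter.1 hp).2, fun X' Y' hc => ?_⟩
  exact hmin (X', Y') (by simp [hc])

/-- there is a minimum-size cover of `Z` containing every row that
belongs to some minimum-size cover of `Z`, and similarly for columns. -/
theorem row_maximal_and_column_maximal_optimal_covers (Z : Finset (Fin m × Fin n)) :
    (∃ (X : Finset (Fin m)) (Y : Finset (Fin n)), IsOptCover Z X Y ∧
      ∀ (i : Fin m) (X' : Finset (Fin m)) (Y' : Finset (Fin n)),
        IsOptCover Z X' Y' → i ∈ X' → i ∈ X) ∧
    (∃ (X : Finset (Fin m)) (Y : Finset (Fin n)), IsOptCover Z X Y ∧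
      ∀ (j : Fin n) (X' : Finset (Fin m)) (Y' : Finset (Fin n)),
        IsOptCover Z X' Y' → j ∈ Y' → j ∈ Y) := by
  classical
  obtain ⟨X0, Y0, h0⟩ := exists_optCover Z
  constructor
  · obtain ⟨p, hp, hmax⟩ := Finset.exists_max_image
      ((Finset.univ : Finset (Finset (Fin m) × Finset (Fin n))).filter
        (fun p => IsOptCover Z p.1 p.2))
      (fun p => p.1.card)
      ⟨(X0, Y0), by simp [h0]⟩
    have hopt : IsOptCover Z p.1 p.2 := (mem_filter.1 hp).2
    refine ⟨p.1, p.2, hopt, fun i X' Y' h' hi => ?_⟩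
    have hnew := (optCover_union_inter hopt h').1
    have hle := hmax (p.1 ∪ X', p.2 ∩ Y') (by simp [hnew])
    have heq : p.1 = p.1 ∪ X' := eq_of_subset_of_card_le subset_union_left hle
    rw [heq]
    exact mem_union_right _ hi
  · obtain ⟨p, hp, hmax⟩ := Finset.exists_max_image
      ((Finset.univ : Finset (Finset (Fin m) × Finset (Fin n))).filter
        (fun p => IsOptCover Z p.1 p.2))
      (fun p => p.2.card)
      ⟨(X0, Y0), by simp [h0]⟩
    have hopt : IsOptCover Z p.1 p.2 := (mem_filter.1 hp).2
    refine ⟨p.1, p.2, hopt, fun j X' Y' h' hj => ?_⟩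
    have hnew := (optCover_union_inter hopt h').2
    have hle := hmax (p.1 ∩ X', p.2 ∪ Y') (by simp [hnew])
    have heq : p.2 = p.2 ∪ Y' := eq_of_subset_of_card_le subset_union_left hle
    rw [heq]
    exact mem_union_right _ hj
end

section
/- A file (row or column) belongs to some minimum-size cover of a set Z of sites if and only if it intersects every maximum-size independent subset of Z. -/
open Finset

variable {m n : ℕ}

/-!
König's theorem, obtained from Hall's theorem with deficiency, says that a minimum cover of `Z`
has exactly `rank Z` files. If an optimal cover contains row `i` and a maximum independent set `μ`
avoided row `i`, the other files of the cover would cover `μ` with fewer than `rank Z` files.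
Conversely, if every maximum independent set meets row `i`, removing row `i` from `Z` lowers the
rank, so an optimal cover of the remaining sites together with row `i` is an optimal cover of `Z`.
-/

theorem Finset.exists_injective_of_card_le_biUnion_card_add {ι α : Type*} [DecidableEq α]
    (t : ι → Finset α) (d : ℕ) (h : ∀ s : Finset ι, #s ≤ #(s.biUnion t) + d) :
    ∃ f : ι → α ⊕ Fin d, Function.Injective f ∧
      ∀ i, f i ∈ (t i).disjSum (univ : Finset (Fin d)) := by
  refine (all_card_le_biUnion_card_iff_exists_injective _).1 fun s ↦ ?_
  obtain rfl | ⟨i, hi⟩ := s.eq_empty_or_nonempty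
  · simp
  have hsub : (s.biUnion t).disjSum (univ : Finset (Fin d)) ⊆
      s.biUnion fun i ↦ (t i).disjSum univ := by
    rintro (a | k) hx
    · obtain ⟨j, hj, ha⟩ := mem_biUnion.1 (inl_mem_disjSum.1 hx)
      exact mem_biUnion.2 ⟨j, hj, inl_mem_disjSum.2 ha⟩
    · exact mem_biUnion.2 ⟨i, hi, inr_mem_disjSum.2 (mem_univ k)⟩
  calc #s ≤ #(s.biUnion t) + d := h s
    _ = #((s.biUnion t).disjSum univ) := by rw [card_disjSum, card_univ, Fintype.card_fin]
    _ ≤ _ := card_le_card hsub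

theorem Indep.injOn_fst {μ : Finset (Fin m × Fin n)} (hμ : Indep μ) :
    Set.InjOn Prod.fst (μ : Set (Fin m × Fin n)) := fun p hp q hq h ↦
  by_contra fun hne ↦ (hμ p hp q hq hne).1 h

theorem Indep.injOn_snd {μ : Finset (Fin m × Fin n)} (hμ : Indep μ) :
    Set.InjOn Prod.snd (μ : Set (Fin m × Fin n)) := fun p hp q hq h ↦
  by_contra fun hne ↦ (hμ p hp q hq hne).2 h

theorem Covers.mono {X : Finset (Fin m)} {Y : Finset (Fin n)} {Z Z' : Finset (Fin m × Fin n)}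
    (hcov : Covers X Y Z) (h : Z' ⊆ Z) : Covers X Y Z' :=
  fun p hp ↦ hcov p (h hp)

theorem Indep.card_le_of_covers {μ : Finset (Fin m × Fin n)} {X : Finset (Fin m)}
    {Y : Finset (Fin n)} (hμ : Indep μ) (hcov : Covers X Y μ) : #μ ≤ #X + #Y := by
  rw [← card_filter_add_card_filter_not (fun p ↦ p.1 ∈ X)]
  refine add_le_add (card_le_card_of_injOn Prod.fst (fun p hp ↦ (mem_filter.1 hp).2)
    (hμ.injOn_fst.mono (coe_subset.2 (filter_subset _ _)))) ?_
  refine card_le_card_of_injOn Prod.snd (fun p hp ↦ ?_)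
    (hμ.injOn_snd.mono (coe_subset.2 (filter_subset _ _)))
  obtain ⟨hpμ, hpX⟩ := mem_filter.1 hp
  exact (hcov p hpμ).resolve_left hpX

open scoped Classical in
noncomputable def rank (Z : Finset (Fin m × Fin n)) : ℕ :=
  (Z.powerset.filter Indep).sup card

section Rank

variable {Z Z' μ : Finset (Fin m × Fin n)} {X : Finset (Fin m)} {Y : Finset (Fin n)}

theorem card_le_rank (hμZ : μ ⊆ Z) (hμ : Indep μ) : #μ ≤ rank Z := by
  classical
  exact le_sup (mem_filter.2 ⟨mem_powerset.2 hμZ, hμ⟩)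

theorem exists_indep_card_eq_rank (Z : Finset (Fin m × Fin n)) :
    ∃ μ ⊆ Z, Indep μ ∧ #μ = rank Z := by
  classical
  obtain ⟨μ, hμ, hsup⟩ := exists_mem_eq_sup (Z.powerset.filter Indep)
    ⟨∅, mem_filter.2 ⟨empty_mem_powerset Z, by simp [Indep]⟩⟩ card
  obtain ⟨hμZ, hμI⟩ := mem_filter.1 hμ
  exact ⟨μ, mem_powerset.1 hμZ, hμI, by rw [rank, hsup]⟩

theorem rank_mono (h : Z' ⊆ Z) : rank Z' ≤ rank Z := by
  obtain ⟨μ, hμZ', hμ, hcard⟩ := exists_indep_card_eq_rank Z'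
  exact hcard ▸ card_le_rank (hμZ'.trans h) hμ

theorem forall_card_le_iff_card_eq_rank (hμZ : μ ⊆ Z) (hμ : Indep μ) :
    (∀ μ' : Finset (Fin m × Fin n), μ' ⊆ Z → Indep μ' → #μ' ≤ #μ) ↔
      #μ = rank Z := by
  refine ⟨fun hmax ↦ (card_le_rank hμZ hμ).antisymm ?_, fun h μ' hμ'Z hμ' ↦ ?_⟩
  · obtain ⟨ν, hνZ, hν, hcard⟩ := exists_indep_card_eq_rank Z
    exact hcard ▸ hmax ν hνZ hν
  · exact h ▸ card_le_rank hμ'Z hμ'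

theorem rank_le_of_covers (hcov : Covers X Y Z) : rank Z ≤ #X + #Y := by
  obtain ⟨μ, hμZ, hμ, hcard⟩ := exists_indep_card_eq_rank Z
  exact hcard ▸ hμ.card_le_of_covers (hcov.mono hμZ)

theorem rank_lt_of_forall_not_subset (h : Z' ⊆ Z)
    (hmeet : ∀ μ ⊆ Z, Indep μ → #μ = rank Z → ¬μ ⊆ Z') : rank Z' < rank Z := by
  refine (rank_mono h).lt_of_ne fun heq ↦ ?_
  obtain ⟨μ, hμZ', hμ, hcard⟩ := exists_indep_card_eq_rank Z'
  exact hmeet μ (hμZ'.trans h) hμ (hcard.trans heq) hμZ'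

end Rank

def cols (Z : Finset (Fin m × Fin n)) (a : Fin m) : Finset (Fin n) :=
  univ.filter fun b ↦ (a, b) ∈ Z

theorem exists_indep_of_card_le_biUnion_cols_add {Z : Finset (Fin m × Fin n)} (d : ℕ)
    (h : ∀ s : Finset (Fin m), #s ≤ #(s.biUnion (cols Z)) + d) :
    ∃ μ ⊆ Z, Indep μ ∧ m ≤ #μ + d := by
  obtain ⟨f, hf, hfZ⟩ := exists_injective_of_card_le_biUnion_card_add (cols Z) d h
  -- rows that `f` sends to one of the `d` dummy columns are left unmatched
  set μ := Z.filter fun p ↦ f p.1 = .inl p.2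
  have hμ : Indep μ := by
    intro p hp q hq hne
    have hp' := (mem_filter.1 hp).2
    have hq' := (mem_filter.1 hq).2
    refine ⟨fun h1 ↦ hne (Prod.ext h1 ?_), fun h2 ↦ hne (Prod.ext (hf ?_) h2)⟩
    · exact Sum.inl_injective (hp'.symm.trans (h1 ▸ hq'))
    · rw [hp', hq', h2]
  have hleft : #(univ.filter fun a ↦ (f a).isLeft) ≤ #μ := by
    refine card_le_card_of_surjOn Prod.fst fun a ha ↦ ?_
    obtain ⟨b, hb⟩ := Sum.isLeft_iff.1 (mem_filter.1 ha).2
    have hab : (a, b) ∈ Z := by simpa [cols, hb] using hfZ a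
    exact ⟨(a, b), mem_filter.2 ⟨hab, hb⟩, rfl⟩
  have hright : #(univ.filter fun a ↦ ¬(f a).isLeft) ≤ d := by
    calc _ ≤ #((univ : Finset (Fin d)).map .inr) := by
          refine card_le_card_of_injOn f (fun a ha ↦ ?_) hf.injOn
          obtain ⟨k, hk⟩ := Sum.isRight_iff.1 (Sum.not_isLeft.1 (mem_filter.1 ha).2)
          simp [hk]
      _ = d := by simp
  have hsplit := card_filter_add_card_filter_not (s := (univ : Finset (Fin m)))
    fun a ↦ (f a).isLeft
  rw [card_univ, Fintype.card_fin] at hsplit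
  exact ⟨μ, filter_subset _ _, hμ, by omega⟩

/-- König's theorem. -/
theorem exists_covers_card_eq_rank (Z : Finset (Fin m × Fin n)) :
    ∃ (X : Finset (Fin m)) (Y : Finset (Fin n)), Covers X Y Z ∧ #X + #Y = rank Z := by
  -- Take a smallest cover `(Sᶜ, N(S))`, `N(S)` the columns met by the rows `S`: its minimality
  -- is Hall's condition with deficiency `m - (#Sᶜ + #N(S))`.
  obtain ⟨S, -, hS⟩ := exists_min_image univ
    (fun S : Finset (Fin m) ↦ #Sᶜ + #(S.biUnion (cols Z))) univ_nonempty
  have hcov : Covers Sᶜ (S.biUnion (cols Z)) Z := fun p hp ↦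
    (em (p.1 ∈ S)).symm.imp mem_compl.2 fun hpS ↦ mem_biUnion.2 ⟨p.1, hpS, by simpa [cols]⟩
  have hcover_le : #Sᶜ + #(S.biUnion (cols Z)) ≤ m := by
    simpa using hS ∅ (mem_univ ∅)
  have hhall : ∀ s : Finset (Fin m),
      #s ≤ #(s.biUnion (cols Z)) + (m - (#Sᶜ + #(S.biUnion (cols Z)))) := by
    intro s
    have hs := hS s (mem_univ s)
    have hsm := card_le_univ s
    simp only [card_compl, Fintype.card_fin] at hs hsm hcover_le ⊢
    omega
  obtain ⟨μ, hμZ, hμ, hcard⟩ := exists_indep_of_card_le_biUnion_cols_add _ hhall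
  refine ⟨_, _, hcov, (rank_le_of_covers hcov).antisymm' ?_⟩
  have := card_le_rank hμZ hμ
  omega

section OptCover

variable {Z : Finset (Fin m × Fin n)} {X : Finset (Fin m)} {Y : Finset (Fin n)}

theorem isOptCover_iff : IsOptCover Z X Y ↔ Covers X Y Z ∧ #X + #Y = rank Z := by
  refine ⟨fun ⟨hcov, hmin⟩ ↦ ⟨hcov, (rank_le_of_covers hcov).antisymm' ?_⟩,
    fun ⟨hcov, hcard⟩ ↦ ⟨hcov, fun X' Y' hcov' ↦ hcard ▸ rank_le_of_covers hcov'⟩⟩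
  obtain ⟨X₀, Y₀, hcov₀, hcard₀⟩ := exists_covers_card_eq_rank Z
  exact hcard₀ ▸ hmin X₀ Y₀ hcov₀

theorem isOptCover_of_card_le_rank (hcov : Covers X Y Z) (hcard : #X + #Y ≤ rank Z) :
    IsOptCover Z X Y :=
  isOptCover_iff.2 ⟨hcov, hcard.antisymm (rank_le_of_covers hcov)⟩

theorem exists_isOptCover_with_row_iff (i : Fin m) :
    (∃ (X : Finset (Fin m)) (Y : Finset (Fin n)), IsOptCover Z X Y ∧ i ∈ X) ↔
      ∀ μ ⊆ Z, Indep μ → #μ = rank Z → ∃ p ∈ μ, p.1 = i := by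
  constructor
  · rintro ⟨X, Y, hopt, hiX⟩ μ hμZ hμ hcard
    obtain ⟨hcov, hcardXY⟩ := isOptCover_iff.1 hopt
    by_contra! hμi
    have hcov' : Covers (X.erase i) Y μ := fun p hp ↦
      (hcov p (hμZ hp)).imp_left fun hpX ↦ mem_erase.2 ⟨hμi p hp, hpX⟩
    have := hμ.card_le_of_covers hcov'
    have := card_erase_add_one hiX
    omega
  · intro hmeet
    have hlt : rank (Z.filter fun p ↦ p.1 ≠ i) < rank Z := by
      refine rank_lt_of_forall_not_subset (filter_subset _ _) fun μ hμZ hμ hcard hsub ↦ ?_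
      obtain ⟨p, hp, rfl⟩ := hmeet μ hμZ hμ hcard
      exact (mem_filter.1 (hsub hp)).2 rfl
    obtain ⟨X, Y, hcov, hcard⟩ := exists_covers_card_eq_rank (Z.filter fun p ↦ p.1 ≠ i)
    refine ⟨insert i X, Y, isOptCover_of_card_le_rank (fun p hp ↦ ?_) ?_, mem_insert_self i X⟩
    · obtain rfl | hpi := eq_or_ne p.1 i
      · exact .inl (mem_insert_self _ _)
      · exact (hcov p (mem_filter.2 ⟨hp, hpi⟩)).imp_left (mem_insert_of_mem ·)
    · have := card_insert_le i X
      omega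

theorem exists_isOptCover_with_col_iff (j : Fin n) :
    (∃ (X : Finset (Fin m)) (Y : Finset (Fin n)), IsOptCover Z X Y ∧ j ∈ Y) ↔
      ∀ μ ⊆ Z, Indep μ → #μ = rank Z → ∃ p ∈ μ, p.2 = j := by
  constructor
  · rintro ⟨X, Y, hopt, hjY⟩ μ hμZ hμ hcard
    obtain ⟨hcov, hcardXY⟩ := isOptCover_iff.1 hopt
    by_contra! hμj
    have hcov' : Covers X (Y.erase j) μ := fun p hp ↦
      (hcov p (hμZ hp)).imp_right fun hpY ↦ mem_erase.2 ⟨hμj p hp, hpY⟩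
    have := hμ.card_le_of_covers hcov'
    have := card_erase_add_one hjY
    omega
  · intro hmeet
    have hlt : rank (Z.filter fun p ↦ p.2 ≠ j) < rank Z := by
      refine rank_lt_of_forall_not_subset (filter_subset _ _) fun μ hμZ hμ hcard hsub ↦ ?_
      obtain ⟨p, hp, rfl⟩ := hmeet μ hμZ hμ hcard
      exact (mem_filter.1 (hsub hp)).2 rfl
    obtain ⟨X, Y, hcov, hcard⟩ := exists_covers_card_eq_rank (Z.filter fun p ↦ p.2 ≠ j)
    refine ⟨X, insert j Y, isOptCover_of_card_le_rank (fun p hp ↦ ?_) ?_, mem_insert_self j Y⟩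
    · obtain rfl | hpj := eq_or_ne p.2 j
      · exact .inr (mem_insert_self _ _)
      · exact (hcov p (mem_filter.2 ⟨hp, hpj⟩)).imp_right (mem_insert_of_mem ·)
    · have := card_insert_le j Y
      omega

end OptCover

/-- a file belongs to some minimum-size cover of `Z` if and only
if it intersects every maximum-size independent subset of `Z`.  Stated for
rows and for columns. -/
theorem file_in_optimal_cover_iff_meets_every_max_independent (Z : Finset (Fin m × Fin n)) :
    (∀ i : Fin m,
      (∃ (X : Finset (Fin m)) (Y : Finset (Fin n)), IsOptCover Z X Y ∧ i ∈ X) ↔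
      (∀ μ : Finset (Fin m × Fin n), μ ⊆ Z → Indep μ →
        (∀ μ' : Finset (Fin m × Fin n), μ' ⊆ Z → Indep μ' → μ'.card ≤ μ.card) →
        ∃ p ∈ μ, p.1 = i)) ∧
    (∀ j : Fin n,
      (∃ (X : Finset (Fin m)) (Y : Finset (Fin n)), IsOptCover Z X Y ∧ j ∈ Y) ↔
      (∀ μ : Finset (Fin m × Fin n), μ ⊆ Z → Indep μ →
        (∀ μ' : Finset (Fin m × Fin n), μ' ⊆ Z → Indep μ' → μ'.card ≤ μ.card) →
        ∃ p ∈ μ, p.2 = j)) := by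
  refine ⟨fun i ↦ ?_, fun j ↦ ?_⟩
  · rw [exists_isOptCover_with_row_iff]
    exact forall_congr' fun μ ↦ imp_congr_right fun hμZ ↦ imp_congr_right fun hμ ↦
      imp_congr_left (forall_card_le_iff_card_eq_rank hμZ hμ).symm
  · rw [exists_isOptCover_with_col_iff]
    exact forall_congr' fun μ ↦ imp_congr_right fun hμZ ↦ imp_congr_right fun hμ ↦
      imp_congr_left (forall_card_le_iff_card_eq_rank hμZ hμ).symm
end

section
/- Let M be a nonnegative m×n matrix, λ = X ∪ Y a minimum-size cover of the zeros of M (X rows, Y columns), let t > 0 be the minimum of the uncovered entries, and let M' be the reduction of M by λ (subtract t from uncovered entries, add t to doubly covered entries). If π is any k-assignment that intersects every file of λ, then cost_{M'}(π) = cost_M(π) − (k − |λ|)·t. -/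
open Finset

variable {m n : ℕ}

/-- reducing `M` by a minimum-size cover `λ = X ∪ Y` of its zeros
changes the cost of any `k`-assignment intersecting every file of `λ` by
exactly `(k - |λ|)·t`. -/
theorem cost_after_reduction
    (M M' : Fin m → Fin n → ℝ) (hM : ∀ i j, 0 ≤ M i j)
    (Z : Finset (Fin m × Fin n)) (hZ : ∀ p : Fin m × Fin n, p ∈ Z ↔ M p.1 p.2 = 0)
    (X : Finset (Fin m)) (Y : Finset (Fin n)) (hcov : IsOptCover Z X Y)
    (t : ℝ) (ht : 0 < t)
    (htmin : IsLeast {x : ℝ | ∃ i j, i ∉ X ∧ j ∉ Y ∧ M i j = x} t)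
    (hM' : ∀ i j, M' i j =
      if i ∈ X then (if j ∈ Y then M i j + t else M i j)
      else (if j ∈ Y then M i j else M i j - t))
    (k : ℕ) (π : Finset (Fin m × Fin n)) (hπ : Indep π) (hπk : π.card = k)
    (hmeetX : ∀ i ∈ X, ∃ p ∈ π, p.1 = i) (hmeetY : ∀ j ∈ Y, ∃ p ∈ π, p.2 = j) :
    cost M' π = cost M π - ((k : ℝ) - (X.card + Y.card : ℕ)) * t := by
  have hX : (π.filter fun p => p.1 ∈ X).card = X.card := by
    apply Finset.card_bij (fun p _ => p.1)
    · intro p hp; exact (Finset.mem_filter.mp hp).2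
    · intro p hp q hq h
      by_contra hne
      exact ((hπ p (Finset.mem_filter.mp hp).1 q (Finset.mem_filter.mp hq).1 hne).1) h
    · intro i hi
      obtain ⟨p, hp, hpi⟩ := hmeetX i hi
      exact ⟨p, Finset.mem_filter.mpr ⟨hp, hpi ▸ hi⟩, hpi⟩
  have hY : (π.filter fun p => p.2 ∈ Y).card = Y.card := by
    apply Finset.card_bij (fun p _ => p.2)
    · intro p hp; exact (Finset.mem_filter.mp hp).2
    · intro p hp q hq h
      by_contra hne
      exact ((hπ p (Finset.mem_filter.mp hp).1 q (Finset.mem_filter.mp hq).1 hne).2) h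
    · intro j hj
      obtain ⟨p, hp, hpj⟩ := hmeetY j hj
      exact ⟨p, Finset.mem_filter.mpr ⟨hp, hpj ▸ hj⟩, hpj⟩
  have key : ∀ p ∈ π, M' p.1 p.2 =
      M p.1 p.2 + ((if p.1 ∈ X then t else 0) + (if p.2 ∈ Y then t else 0) - t) := by
    intro p _
    rw [hM' p.1 p.2]
    by_cases h1 : p.1 ∈ X <;> by_cases h2 : p.2 ∈ Y <;> simp [h1, h2] <;> ring
  have hsum : cost M' π = cost M π +
      ((∑ p ∈ π, if p.1 ∈ X then t else 0) + (∑ p ∈ π, if p.2 ∈ Y then t else 0)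
        - (k : ℝ) * t) := by
    unfold cost
    rw [Finset.sum_congr rfl key, Finset.sum_add_distrib]
    congr 1
    rw [Finset.sum_sub_distrib, Finset.sum_add_distrib, Finset.sum_const, hπk,
      nsmul_eq_mul]
  have e1 : (∑ p ∈ π, if p.1 ∈ X then t else 0) = (X.card : ℝ) * t := by
    rw [← Finset.sum_filter, Finset.sum_const, hX, nsmul_eq_mul]
  have e2 : (∑ p ∈ π, if p.2 ∈ Y then t else 0) = (Y.card : ℝ) * t := by
    rw [← Finset.sum_filter, Finset.sum_const, hY, nsmul_eq_mul]
  rw [hsum, e1, e2]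
  push_cast
  ring
end

section
/- In each step of the reduction process using the column-maximal optimal cover, either the rank of the set of zeros strictly increases, or the rank stays equal and the number of rows in the column-maximal optimal cover strictly increases. -/
open Finset

variable {m n : ℕ}

/-- `(X, Y)` is the column-maximal optimal cover of `Z`. -/
def ColMaxOptCover (Z : Finset (Fin m × Fin n))
    (X : Finset (Fin m)) (Y : Finset (Fin n)) : Prop :=
  IsOptCover Z X Y ∧ ∀ (j : Fin n) (X' : Finset (Fin m)) (Y' : Finset (Fin n)),
    IsOptCover Z X' Y' → j ∈ Y' → j ∈ Y

/-- `Z` has rank `r`: `r` is the maximum size of an independent subset of `Z`. -/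
def IsRank (Z : Finset (Fin m × Fin n)) (r : ℕ) : Prop :=
  (∃ μ : Finset (Fin m × Fin n), μ ⊆ Z ∧ Indep μ ∧ μ.card = r) ∧
  ∀ μ : Finset (Fin m × Fin n), μ ⊆ Z → Indep μ → μ.card ≤ r

/-- Weak duality: any independent subset is at most as large as any cover. -/
lemma indep_card_le_cover {Z μ : Finset (Fin m × Fin n)} {X : Finset (Fin m)}
    {Y : Finset (Fin n)} (hμZ : μ ⊆ Z) (hμ : Indep μ) (hc : Covers X Y Z) :
    μ.card ≤ X.card + Y.card := by
  classical
  have hPQ := Finset.card_filter_add_card_filter_not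
    (s := μ) (p := fun p => p.1 ∈ X)
  have hP : (μ.filter (fun p => p.1 ∈ X)).card ≤ X.card := by
    apply Finset.card_le_card_of_injOn (fun p => p.1)
    · intro p hp; exact (mem_filter.mp hp).2
    · intro p hp q hq hpq
      by_contra hne
      exact (hμ p (mem_filter.mp hp).1 q (mem_filter.mp hq).1 hne).1 hpq
  have hQ : (μ.filter (fun p => ¬ p.1 ∈ X)).card ≤ Y.card := by
    apply Finset.card_le_card_of_injOn (fun p => p.2)
    · intro p hp
      obtain ⟨hpμ, hpx⟩ := mem_filter.mp hp
      rcases hc p (hμZ hpμ) with h | h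
      · exact absurd h hpx
      · exact h
    · intro p hp q hq hpq
      by_contra hne
      exact (hμ p (mem_filter.mp hp).1 q (mem_filter.mp hq).1 hne).2 hpq
  omega

/-- If a cover has the same size as an independent set, every site of the
independent set is covered by exactly one file. -/
lemma singly_covered {Z μ : Finset (Fin m × Fin n)} {X : Finset (Fin m)}
    {Y : Finset (Fin n)} (hμZ : μ ⊆ Z) (hμ : Indep μ) (hc : Covers X Y Z)
    (hcard : X.card + Y.card = μ.card) :
    ∀ p ∈ μ, ¬(p.1 ∈ X ∧ p.2 ∈ Y) := by
  classical
  have hPQ := Finset.card_filter_add_card_filter_not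
    (s := μ) (p := fun p => p.1 ∈ X)
  have hP : (μ.filter (fun p => p.1 ∈ X)).card ≤ X.card := by
    apply Finset.card_le_card_of_injOn (fun p => p.1)
    · intro p hp; exact (mem_filter.mp hp).2
    · intro p hp q hq hpq
      by_contra hne
      exact (hμ p (mem_filter.mp hp).1 q (mem_filter.mp hq).1 hne).1 hpq
  have hinj2 : Set.InjOn (fun p : Fin m × Fin n => p.2) (μ.filter (fun p => ¬ p.1 ∈ X)) := by
    intro p hp q hq hpq
    by_contra hne
    exact (hμ p (mem_filter.mp hp).1 q (mem_filter.mp hq).1 hne).2 hpq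
  have hQ : (μ.filter (fun p => ¬ p.1 ∈ X)).card ≤ Y.card := by
    apply Finset.card_le_card_of_injOn (fun p => p.2) _ hinj2
    intro p hp
    obtain ⟨hpμ, hpx⟩ := mem_filter.mp hp
    rcases hc p (hμZ hpμ) with h | h
    · exact absurd h hpx
    · exact h
  have hQeq : (μ.filter (fun p => ¬ p.1 ∈ X)).image (fun p => p.2) = Y := by
    apply Finset.eq_of_subset_of_card_le
    · intro j hj
      obtain ⟨p, hp, rfl⟩ := mem_image.mp hj
      obtain ⟨hpμ, hpx⟩ := mem_filter.mp hp
      rcases hc p (hμZ hpμ) with h | h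
      · exact absurd h hpx
      · exact h
    · rw [Finset.card_image_of_injOn hinj2]; omega
  rintro p hpμ ⟨hpX, hpY⟩
  have : p.2 ∈ (μ.filter (fun p => ¬ p.1 ∈ X)).image (fun p => p.2) := hQeq ▸ hpY
  obtain ⟨q, hq, hq2⟩ := mem_image.mp this
  obtain ⟨hqμ, hqX⟩ := mem_filter.mp hq
  have hne : q ≠ p := fun h => hqX (h ▸ hpX)
  exact (hμ q hqμ p hpμ hne).2 hq2

/-- König's theorem: there is a cover and an independent subset of `Z` with
the cover no larger than the independent set. -/
lemma konig (Z : Finset (Fin m × Fin n)) :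
    ∃ (X : Finset (Fin m)) (Y : Finset (Fin n)) (μ : Finset (Fin m × Fin n)),
      Covers X Y Z ∧ μ ⊆ Z ∧ Indep μ ∧ X.card + Y.card ≤ μ.card := by
  classical
  set t : Fin m → Finset (Fin n) := fun i => univ.filter (fun j => (i, j) ∈ Z) with ht
  obtain ⟨S₀, -, hS₀⟩ := Finset.exists_max_image (univ : Finset (Finset (Fin m)))
      (fun S => (S.card : ℤ) - ((S.biUnion t).card : ℤ)) ⟨∅, mem_univ _⟩
  have hN₀ : (S₀.biUnion t).card ≤ S₀.card := by
    have := hS₀ ∅ (mem_univ _)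
    simp at this
    omega
  set d : ℕ := S₀.card - (S₀.biUnion t).card with hdd
  set t' : Fin m → Finset (Fin n ⊕ Fin d) :=
    fun i => (t i).image Sum.inl ∪ (univ : Finset (Fin d)).image Sum.inr with ht'
  have hall : ∀ s : Finset (Fin m), s.card ≤ (s.biUnion t').card := by
    intro s
    rcases s.eq_empty_or_nonempty with rfl | ⟨i₀, hi₀⟩
    · simp
    · have hsub : (s.biUnion t).image Sum.inl ∪ (univ : Finset (Fin d)).image Sum.inr
          ⊆ s.biUnion t' := by
        intro x hx
        rcases mem_union.mp hx with hx | hx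
        · obtain ⟨j, hj, rfl⟩ := mem_image.mp hx
          obtain ⟨i, hi, hji⟩ := mem_biUnion.mp hj
          exact mem_biUnion.mpr ⟨i, hi, mem_union_left _ (mem_image_of_mem _ hji)⟩
        · exact mem_biUnion.mpr ⟨i₀, hi₀, mem_union_right _ hx⟩
      have hdisj : Disjoint ((s.biUnion t).image Sum.inl)
          ((univ : Finset (Fin d)).image Sum.inr) := by
        simp [Finset.disjoint_left]
      have hcard : ((s.biUnion t).image Sum.inl ∪ (univ : Finset (Fin d)).image Sum.inr).card
          = (s.biUnion t).card + d := by
        rw [Finset.card_union_of_disjoint hdisj, Finset.card_image_of_injective _ Sum.inl_injective,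
          Finset.card_image_of_injective _ Sum.inr_injective, card_univ, Fintype.card_fin]
      have hmax := hS₀ s (mem_univ s)
      have hle := Finset.card_le_card hsub
      omega
  obtain ⟨f, hfinj, hft⟩ := (Finset.all_card_le_biUnion_card_iff_exists_injective t').mp hall
  set μ : Finset (Fin m × Fin n) :=
    univ.filter (fun p : Fin m × Fin n => f p.1 = Sum.inl p.2) with hμdef
  refine ⟨univ \ S₀, S₀.biUnion t, μ, ?_, ?_, ?_, ?_⟩
  · intro p hp
    by_cases h : p.1 ∈ S₀
    · exact Or.inr (mem_biUnion.mpr ⟨p.1, h, mem_filter.mpr ⟨mem_univ _, hp⟩⟩)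
    · exact Or.inl (mem_sdiff.mpr ⟨mem_univ _, h⟩)
  · intro p hp
    have hf := (mem_filter.mp hp).2
    have hmem := hft p.1
    rw [hf] at hmem
    rcases mem_union.mp hmem with h | h
    · obtain ⟨j, hj, hjeq⟩ := mem_image.mp h
      have : j = p.2 := Sum.inl_injective hjeq
      subst this
      exact (mem_filter.mp hj).2
    · obtain ⟨e, -, heq⟩ := mem_image.mp h
      exact absurd heq (by simp)
  · intro p hp q hq hne
    have hfp := (mem_filter.mp hp).2
    have hfq := (mem_filter.mp hq).2
    constructor
    · intro h
      apply hne
      have h2 : (Sum.inl p.2 : Fin n ⊕ Fin d) = Sum.inl q.2 := by rw [← hfp, ← hfq, h]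
      exact Prod.ext h (Sum.inl_injective h2)
    · intro h
      apply hne
      have h2 : f p.1 = f q.1 := by rw [hfp, hfq, h]
      exact Prod.ext (hfinj h2) h
  · have hμcard : μ.card = (univ.filter (fun i : Fin m => ∃ j, f i = Sum.inl j)).card := by
      apply Finset.card_bij (fun p _ => p.1)
      · intro p hp
        exact mem_filter.mpr ⟨mem_univ _, ⟨p.2, (mem_filter.mp hp).2⟩⟩
      · intro p hp q hq h
        have hfp := (mem_filter.mp hp).2
        have hfq := (mem_filter.mp hq).2
        have h2 : (Sum.inl p.2 : Fin n ⊕ Fin d) = Sum.inl q.2 := by rw [← hfp, ← hfq, h]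
        exact Prod.ext h (Sum.inl_injective h2)
      · intro i hi
        obtain ⟨j, hj⟩ := (mem_filter.mp hi).2
        exact ⟨(i, j), mem_filter.mpr ⟨mem_univ _, hj⟩, rfl⟩
    have hsplit := Finset.card_filter_add_card_filter_not
      (s := (univ : Finset (Fin m))) (p := fun i => ∃ j, f i = Sum.inl j)
    have hcompl : (univ.filter (fun i : Fin m => ¬ ∃ j, f i = Sum.inl j)).card ≤ d := by
      have hsub : (univ.filter (fun i : Fin m => ¬ ∃ j, f i = Sum.inl j)).image f
          ⊆ (univ : Finset (Fin d)).image Sum.inr := by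
        intro x hx
        obtain ⟨i, hi, rfl⟩ := mem_image.mp hx
        have hni := (mem_filter.mp hi).2
        rcases mem_union.mp (hft i) with h | h
        · obtain ⟨j, -, hje⟩ := mem_image.mp h
          exact absurd ⟨j, hje.symm⟩ hni
        · exact h
      calc (univ.filter (fun i : Fin m => ¬ ∃ j, f i = Sum.inl j)).card
          = ((univ.filter (fun i : Fin m => ¬ ∃ j, f i = Sum.inl j)).image f).card :=
            (Finset.card_image_of_injective _ hfinj).symm
        _ ≤ ((univ : Finset (Fin d)).image Sum.inr).card := Finset.card_le_card hsub
        _ ≤ d := by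
            rw [Finset.card_image_of_injective _ Sum.inr_injective, card_univ, Fintype.card_fin]
    have hXcard : (univ \ S₀).card = Fintype.card (Fin m) - S₀.card := by
      rw [Finset.card_sdiff_of_subset (subset_univ _), card_univ]
    have hSm : S₀.card ≤ Fintype.card (Fin m) :=
      le_trans (Finset.card_le_card (subset_univ _)) (by rw [card_univ])
    have huniv : (univ : Finset (Fin m)).card = Fintype.card (Fin m) := card_univ
    omega

lemma optCover_card_eq_rank {Z : Finset (Fin m × Fin n)} {X : Finset (Fin m)}
    {Y : Finset (Fin n)} {r : ℕ} (hc : IsOptCover Z X Y) (hr : IsRank Z r) :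
    X.card + Y.card = r := by
  obtain ⟨X', Y', μ', hcov', hμZ', hμI', hle'⟩ := konig Z
  have h1 : X.card + Y.card ≤ r :=
    le_trans (hc.2 X' Y' hcov') (le_trans hle' (hr.2 μ' hμZ' hμI'))
  obtain ⟨μ₀, hsub, hind, hcard⟩ := hr.1
  have h2 : μ₀.card ≤ X.card + Y.card := indep_card_le_cover hsub hind hc.1
  omega

/-- in one reduction step by the column-maximal optimal cover,
either the rank of the zero set strictly increases, or the rank stays the same
and the number of rows in the column-maximal optimal cover strictly
increases. -/
theorem reduction_step_progress
    (M₀ M₁ : Fin m → Fin n → ℝ) (hM₀ : ∀ i j, 0 ≤ M₀ i j)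
    (Z₀ Z₁ : Finset (Fin m × Fin n))
    (hZ₀ : ∀ p : Fin m × Fin n, p ∈ Z₀ ↔ M₀ p.1 p.2 = 0)
    (hZ₁ : ∀ p : Fin m × Fin n, p ∈ Z₁ ↔ M₁ p.1 p.2 = 0)
    (X₀ : Finset (Fin m)) (Y₀ : Finset (Fin n)) (hcov₀ : ColMaxOptCover Z₀ X₀ Y₀)
    (t : ℝ) (htmin : IsLeast {x : ℝ | ∃ i j, i ∉ X₀ ∧ j ∉ Y₀ ∧ M₀ i j = x} t)
    (hM₁ : ∀ i j, M₁ i j =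
      if i ∈ X₀ then (if j ∈ Y₀ then M₀ i j + t else M₀ i j)
      else (if j ∈ Y₀ then M₀ i j else M₀ i j - t))
    (X₁ : Finset (Fin m)) (Y₁ : Finset (Fin n)) (hcov₁ : ColMaxOptCover Z₁ X₁ Y₁)
    (r₀ r₁ : ℕ) (hr₀ : IsRank Z₀ r₀) (hr₁ : IsRank Z₁ r₁) :
    r₀ < r₁ ∨ (r₁ = r₀ ∧ X₀.card < X₁.card) := by
  classical
  obtain ⟨⟨hc₀, hopt₀⟩, hmax₀⟩ := hcov₀
  obtain ⟨⟨hc₁, hopt₁⟩, hmax₁⟩ := hcov₁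
  -- singly covered zeros of Z₀ remain zeros of Z₁
  have hstay : ∀ p ∈ Z₀, ¬(p.1 ∈ X₀ ∧ p.2 ∈ Y₀) → p ∈ Z₁ := by
    intro p hp hnot
    have hz : M₀ p.1 p.2 = 0 := (hZ₀ p).mp hp
    rw [hZ₁, hM₁]
    rcases hc₀ p hp with h1 | h2
    · have h2 : p.2 ∉ Y₀ := fun hy => hnot ⟨h1, hy⟩
      simp [h1, h2, hz]
    · have h1 : p.1 ∉ X₀ := fun hx => hnot ⟨hx, h2⟩
      simp [h1, h2, hz]
  have hK₀ : X₀.card + Y₀.card = r₀ := optCover_card_eq_rank ⟨hc₀, hopt₀⟩ hr₀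
  have hK₁ : X₁.card + Y₁.card = r₁ := optCover_card_eq_rank ⟨hc₁, hopt₁⟩ hr₁
  -- the rank cannot decrease
  obtain ⟨μ, hμZ, hμI, hμc⟩ := hr₀.1
  have hsingle := singly_covered hμZ hμI hc₀ (by omega)
  have hμZ₁ : μ ⊆ Z₁ := fun p hp => hstay p (hμZ hp) (hsingle p hp)
  have hle : r₀ ≤ r₁ := by
    have := hr₁.2 μ hμZ₁ hμI
    omega
  rcases lt_or_eq_of_le hle with hlt | heq
  · exact Or.inl hlt
  · right
    refine ⟨heq.symm, ?_⟩
    -- equal ranks: lattice cover argument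
    have hC1 : Covers (X₀ ∪ X₁) (Y₀ ∩ Y₁) Z₀ := by
      intro p hp
      by_cases hx : p.1 ∈ X₀
      · exact Or.inl (mem_union_left _ hx)
      · rcases hc₀ p hp with h1 | h2
        · exact absurd h1 hx
        · have hp1 : p ∈ Z₁ := hstay p hp (fun hc => hx hc.1)
          rcases hc₁ p hp1 with h3 | h4
          · exact Or.inl (mem_union_right _ h3)
          · exact Or.inr (mem_inter.mpr ⟨h2, h4⟩)
    have hC2 : Covers (X₀ ∩ X₁) (Y₀ ∪ Y₁) Z₀ := by
      intro p hp
      by_cases hy : p.2 ∈ Y₀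
      · exact Or.inr (mem_union_left _ hy)
      · rcases hc₀ p hp with h1 | h2
        · have hp1 : p ∈ Z₁ := hstay p hp (fun hc => hy hc.2)
          rcases hc₁ p hp1 with h3 | h4
          · exact Or.inl (mem_inter.mpr ⟨h1, h3⟩)
          · exact Or.inr (mem_union_right _ h4)
        · exact absurd h2 hy
    have h1 := hopt₀ _ _ hC1
    have hXie := Finset.card_union_add_card_inter X₀ X₁
    have hYie := Finset.card_union_add_card_inter Y₀ Y₁
    have hC2size : (X₀ ∩ X₁).card + (Y₀ ∪ Y₁).card ≤ X₀.card + Y₀.card := by omega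
    have hC2opt : IsOptCover Z₀ (X₀ ∩ X₁) (Y₀ ∪ Y₁) :=
      ⟨hC2, fun X' Y' hc' => le_trans hC2size (hopt₀ X' Y' hc')⟩
    have hY : Y₁ ⊆ Y₀ := fun j hj => hmax₀ j _ _ hC2opt (mem_union_right _ hj)
    have hYeq : Y₀ ∪ Y₁ = Y₀ := union_eq_left.mpr hY
    have h2 := hopt₀ _ _ hC2
    rw [hYeq] at h2
    have hXsub : X₀ ⊆ X₁ := by
      have hXeq : X₀ ∩ X₁ = X₀ :=
        Finset.eq_of_subset_of_card_le inter_subset_left (by omega)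
      intro i hi
      rw [← hXeq] at hi
      exact (mem_inter.mp hi).2
    obtain ⟨i', j', hi', hj', hM⟩ := htmin.1
    have hz : (i', j') ∈ Z₁ := by
      rw [hZ₁, hM₁]
      simp [hi', hj', hM]
    have hi'X₁ : i' ∈ X₁ := by
      rcases hc₁ _ hz with h | h
      · exact h
      · exact absurd (hY h) hj'
    exact Finset.card_lt_card ((Finset.ssubset_iff_of_subset hXsub).mpr ⟨i', hi'X₁, hi'⟩)
end

section
/- Consider the urn process on a finite weighted set R with positive weights w: balls are drawn one at a time without replacement, each time with probability proportional to weight. Let I be an order ideal in 2^R (a family of subsets closed under taking subsets) with ∅ ∈ I and R ∉ I. Then ∑_{X ∈ I} ∑_{i : X∪{i} ∉ I} w(i)·Pr_R(X)/w(∁X) = 1, where Pr_R(X) is the probability that the set of balls drawn at some point equals X, and w(∁X) = ∑_{i ∉ X} w(i). -/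
open Finset

variable {ι : Type*} [DecidableEq ι]

/-- The probability that the urn process draws the balls in the order given by
the list `l`: at each step, each remaining ball is drawn with probability
proportional to its weight. -/
noncomputable def listProb (w : ι → ℝ) : List ι → ℝ
  | [] => 1
  | i :: l => w i / ((i :: l).map w).sum * listProb w l

/-- `urnPr w R X` is the probability that at some point of the urn process on
the weighted set `(R, w)` the set of drawn balls is exactly `X`. -/
noncomputable def urnPr (w : ι → ℝ) (R X : Finset ι) : ℝ :=
  ∑ l ∈ R.toList.permutations.toFinset,
    if (l.take X.card).toFinset = X then listProb w l else 0

/-- `exitProb w R I i` is the probability that ball `i` belongs to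
`exit_R(I)`, i.e. that `i` is drawn at a moment when the set of already drawn
balls belongs to the ideal `I`. -/
noncomputable def exitProb (w : ι → ℝ) (R : Finset ι) (I : Finset (Finset ι)) (i : ι) : ℝ :=
  ∑ l ∈ R.toList.permutations.toFinset,
    if (l.take (l.idxOf i)).toFinset ∈ I then listProb w l else 0

/-!
Read `w i * urnPr w R X / w(R \ X)` as a flow along the edge `X → insert i X` of the Boolean
lattice. The flow out of any `X ⊂ R` is `urnPr w R X`, and so is the flow into any nonempty
`X ⊆ R`, because splitting off the last ball of an arrangement of `X` gives the urn process
recursion. Summing outflow minus inflow over the ideal `I`, the edges inside `I` cancel and the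
flow leaving `I` equals the flow injected at `∅`, that is `urnPr w R ∅ = 1`.
-/

noncomputable def perms (s : Finset ι) : Finset (List ι) := s.toList.permutations.toFinset

theorem mem_perms {s : Finset ι} {l : List ι} : l ∈ perms s ↔ l.Nodup ∧ l.toFinset = s := by
  rw [perms, List.mem_toFinset, List.mem_permutations]
  constructor
  · intro h
    exact ⟨h.nodup_iff.2 s.nodup_toList, by rw [List.toFinset_eq_iff_perm_dedup.2 h.dedup,
      Finset.toList_toFinset]⟩
  · rintro ⟨hl, rfl⟩
    exact List.perm_of_nodup_nodup_toFinset_eq hl (nodup_toList _) (toList_toFinset _).symm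

theorem perms_empty : perms (∅ : Finset ι) = {[]} := by
  ext l
  simp only [mem_perms, List.toFinset_eq_empty_iff, mem_singleton]
  exact ⟨And.right, fun h => ⟨h ▸ List.nodup_nil, h⟩⟩

theorem sum_map_eq_sum_of_mem_perms {M : Type*} [AddCommMonoid M] (f : ι → M) {s : Finset ι}
    {l : List ι} (hl : l ∈ perms s) : (l.map f).sum = ∑ i ∈ s, f i := by
  obtain ⟨hnd, rfl⟩ := mem_perms.1 hl
  exact (List.sum_toFinset f hnd).symm

theorem length_eq_card_of_mem_perms {s : Finset ι} {l : List ι} (hl : l ∈ perms s) :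
    l.length = s.card := by
  obtain ⟨hnd, rfl⟩ := mem_perms.1 hl
  exact (List.toFinset_card_of_nodup hnd).symm

theorem cons_mem_perms {s : Finset ι} {i : ι} {l : List ι} :
    i :: l ∈ perms s ↔ i ∈ s ∧ l ∈ perms (s.erase i) := by
  simp only [mem_perms, List.nodup_cons, List.toFinset_cons]
  constructor
  · rintro ⟨⟨hi, hnd⟩, rfl⟩
    exact ⟨mem_insert_self _ _, hnd, (erase_insert (by simpa using hi)).symm⟩
  · rintro ⟨hi, hnd, hl⟩
    refine ⟨⟨fun h => ?_, hnd⟩, by rw [hl, insert_erase hi]⟩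
    have hi' : i ∈ s.erase i := hl ▸ List.mem_toFinset.2 h
    simp at hi'

theorem append_mem_perms_iff {R X : Finset ι} (hX : X ⊆ R) {p m : List ι} :
    p ++ m ∈ perms R ∧ p.toFinset = X ↔ p ∈ perms X ∧ m ∈ perms (R \ X) := by
  simp only [mem_perms, List.nodup_append, List.toFinset_append]
  constructor
  · rintro ⟨⟨⟨hp, hm, hdisj⟩, rfl⟩, rfl⟩
    refine ⟨⟨hp, rfl⟩, hm, (union_sdiff_cancel_left ?_).symm⟩
    exact disjoint_left.2 fun a ha hb => hdisj a (by simpa using ha) a (by simpa using hb) rfl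
  · rintro ⟨⟨hp, rfl⟩, hm, hmR⟩
    refine ⟨⟨⟨hp, hm, ?_⟩, by rw [hmR, union_sdiff_of_subset hX]⟩, rfl⟩
    rintro a ha b hb rfl
    have : a ∈ m.toFinset := List.mem_toFinset.2 hb
    simp [hmR, ha] at this

theorem sum_perms_reverse {M : Type*} [AddCommMonoid M] (s : Finset ι) (f : List ι → M) :
    ∑ l ∈ perms s, f l.reverse = ∑ l ∈ perms s, f l := by
  have hrev : ∀ l ∈ perms s, l.reverse ∈ perms s := fun l hl => by
    simpa [mem_perms, List.nodup_reverse] using hl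
  exact sum_nbij' List.reverse List.reverse hrev hrev (fun l _ => l.reverse_reverse)
    (fun l _ => l.reverse_reverse) fun _ _ => rfl

theorem sum_perms_eq_sum_cons {M : Type*} [AddCommMonoid M] {s : Finset ι} (hs : s.Nonempty)
    (f : List ι → M) :
    ∑ l ∈ perms s, f l = ∑ i ∈ s, ∑ l ∈ perms (s.erase i), f (i :: l) := by
  rw [sum_sigma']
  refine (sum_bij (fun x _ => x.1 :: x.2) ?_ ?_ ?_ fun _ _ => rfl).symm
  · rintro ⟨i, l⟩ h
    exact cons_mem_perms.2 (mem_sigma.1 h)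
  · rintro ⟨i, l⟩ - ⟨j, m⟩ - h
    obtain ⟨rfl, rfl⟩ := List.cons_eq_cons.1 h
    rfl
  · rintro (_ | ⟨i, l⟩) hl
    · obtain ⟨-, rfl⟩ := mem_perms.1 hl
      simp at hs
    · exact ⟨⟨i, l⟩, mem_sigma.2 (cons_mem_perms.1 hl), rfl⟩

theorem sum_perms_eq_sum_concat {M : Type*} [AddCommMonoid M] {s : Finset ι} (hs : s.Nonempty)
    (f : List ι → M) :
    ∑ l ∈ perms s, f l = ∑ i ∈ s, ∑ l ∈ perms (s.erase i), f (l ++ [i]) := by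
  rw [← sum_perms_reverse, sum_perms_eq_sum_cons hs]
  refine sum_congr rfl fun i _ => ?_
  rw [← sum_perms_reverse]
  simp only [List.reverse_cons, List.reverse_reverse]

theorem sum_perms_filter_take {M : Type*} [AddCommMonoid M] {R X : Finset ι} (hX : X ⊆ R)
    (f : List ι → M) :
    ∑ l ∈ perms R with (l.take X.card).toFinset = X, f l =
      ∑ p ∈ perms X, ∑ m ∈ perms (R \ X), f (p ++ m) := by
  rw [← sum_product']
  refine (sum_bij (fun x _ => x.1 ++ x.2) ?_ ?_ ?_ fun _ _ => rfl).symm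
  · rintro ⟨p, m⟩ h
    obtain ⟨hl, hp⟩ := (append_mem_perms_iff hX).2 (mem_product.1 h)
    rw [mem_filter, List.take_left' (length_eq_card_of_mem_perms (mem_product.1 h).1)]
    exact ⟨hl, hp⟩
  · rintro ⟨p, m⟩ h ⟨p', m'⟩ h' heq
    have hlen := (length_eq_card_of_mem_perms (mem_product.1 h).1).trans
      (length_eq_card_of_mem_perms (mem_product.1 h').1).symm
    obtain ⟨rfl, rfl⟩ := List.append_inj heq hlen
    rfl
  · intro l hl
    rw [mem_filter] at hl
    refine ⟨⟨l.take X.card, l.drop X.card⟩, mem_product.2 ((append_mem_perms_iff hX).1 ?_),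
      List.take_append_drop _ l⟩
    rwa [List.take_append_drop]

theorem sum_filter_insert_mem_eq_sum_erase {M : Type*} [AddCommMonoid M] {R : Finset ι}
    {I : Finset (Finset ι)} (hIsub : ∀ X ∈ I, X ⊆ R) (hIdeal : ∀ X ∈ I, ∀ Y, Y ⊆ X → Y ∈ I)
    (f : Finset ι → ι → M) :
    ∑ X ∈ I, ∑ i ∈ R \ X with insert i X ∈ I, f X i = ∑ Y ∈ I, ∑ i ∈ Y, f (Y.erase i) i := by
  rw [sum_sigma', sum_sigma']
  refine sum_nbij' (fun x => ⟨insert x.2 x.1, x.2⟩) (fun y => ⟨y.1.erase y.2, y.2⟩)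
    ?_ ?_ ?_ ?_ ?_
  · rintro ⟨X, i⟩ h
    simp only [mem_sigma, mem_filter] at h ⊢
    exact ⟨h.2.2, mem_insert_self i X⟩
  · rintro ⟨Y, i⟩ h
    rw [mem_sigma] at h
    simp only [mem_sigma, mem_filter, mem_sdiff, mem_erase, insert_erase h.2]
    exact ⟨hIdeal Y h.1 _ (erase_subset i Y), ⟨hIsub Y h.1 h.2, fun hi => hi.1 rfl⟩, h.1⟩
  · rintro ⟨X, i⟩ h
    simp only [mem_sigma, mem_filter, mem_sdiff] at h
    simp [erase_insert h.2.1.2]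
  · rintro ⟨Y, i⟩ h
    simp [insert_erase (mem_sigma.1 h).2]
  · intro x h
    simp [erase_insert (mem_sdiff.1 (mem_filter.1 (mem_sigma.1 h).2).1).2]

theorem sum_exit_eq_of_flow_conservation {M : Type*} [AddCommGroup M] {R : Finset ι}
    {I : Finset (Finset ι)} (hIsub : ∀ X ∈ I, X ⊆ R) (hIdeal : ∀ X ∈ I, ∀ Y, Y ⊆ X → Y ∈ I)
    (hbot : ∅ ∈ I) {f : Finset ι → ι → M} {g : Finset ι → M}
    (hout : ∀ X ∈ I, ∑ i ∈ R \ X, f X i = g X)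
    (hin : ∀ Y ∈ I, Y.Nonempty → ∑ i ∈ Y, f (Y.erase i) i = g Y) :
    ∑ X ∈ I, ∑ i ∈ R \ X with insert i X ∉ I, f X i = g ∅ := by
  have hsplit : ∀ X ∈ I, ∑ i ∈ R \ X with insert i X ∉ I, f X i =
      g X - ∑ i ∈ R \ X with insert i X ∈ I, f X i := fun X hX => by
    rw [← hout X hX, ← sum_filter_add_sum_filter_not (R \ X) (fun i => insert i X ∈ I)]
    abel
  have hinflow : ∑ Y ∈ I, ∑ i ∈ Y, f (Y.erase i) i = ∑ Y ∈ I.erase ∅, g Y := by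
    rw [← sum_erase_add I _ hbot, sum_empty, add_zero]
    exact sum_congr rfl fun Y hY =>
      hin Y (mem_of_mem_erase hY) (nonempty_iff_ne_empty.2 (ne_of_mem_erase hY))
  rw [sum_congr rfl hsplit, sum_sub_distrib, sum_filter_insert_mem_eq_sum_erase hIsub hIdeal,
    hinflow, ← sum_erase_add I g hbot, add_sub_cancel_left]

/-- The probability that the urn process draws the balls of `p` first, in this order, when the
balls not in `p` have total weight `c`. -/
noncomputable def prefixProb {α : Type*} (w : α → ℝ) (c : ℝ) : List α → ℝ
  | [] => 1
  | i :: p => w i / (((i :: p).map w).sum + c) * prefixProb w c p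

theorem listProb_append {α : Type*} (w : α → ℝ) (p m : List α) :
    listProb w (p ++ m) = prefixProb w (m.map w).sum p * listProb w m := by
  induction p with
  | nil => simp [prefixProb]
  | cons i p ih =>
    simp only [List.cons_append, listProb, prefixProb, ih, List.map_cons, List.map_append,
      List.sum_cons, List.sum_append]
    ring

theorem prefixProb_concat {α : Type*} (w : α → ℝ) (c : ℝ) (p : List α) (i : α) :
    prefixProb w c (p ++ [i]) = prefixProb w (w i + c) p * (w i / (w i + c)) := by
  induction p with
  | nil => simp [prefixProb]
  | cons j p ih =>
    simp only [List.cons_append, prefixProb, ih, List.map_cons, List.map_append,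
      List.sum_cons, List.sum_append, List.map_nil, List.sum_nil]
    ring

theorem sum_listProb (w : ι → ℝ) {s : Finset ι} (hw : ∀ i ∈ s, 0 < w i) :
    ∑ l ∈ perms s, listProb w l = 1 := by
  induction s using Finset.strongInduction with
  | H s ih =>
    rcases s.eq_empty_or_nonempty with rfl | hs
    · rw [perms_empty, sum_singleton, listProb]
    have hpos : 0 < ∑ i ∈ s, w i := sum_pos hw hs
    rw [sum_perms_eq_sum_cons hs]
    calc ∑ i ∈ s, ∑ l ∈ perms (s.erase i), listProb w (i :: l)
        = ∑ i ∈ s, w i / ∑ j ∈ s, w j := sum_congr rfl fun i hi => by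
          rw [← mul_one (w i / _), ← ih _ (erase_ssubset hi) fun j hj => hw j (mem_of_mem_erase hj),
            mul_sum]
          refine sum_congr rfl fun l hl => ?_
          rw [listProb, sum_map_eq_sum_of_mem_perms w (cons_mem_perms.2 ⟨hi, hl⟩)]
      _ = 1 := by rw [← sum_div, div_self hpos.ne']

theorem urnPr_eq_sum_prefixProb {w : ι → ℝ} {R X : Finset ι} (hw : ∀ i ∈ R, 0 < w i)
    (hX : X ⊆ R) : urnPr w R X = ∑ p ∈ perms X, prefixProb w (∑ j ∈ R \ X, w j) p := by
  have hfilter : urnPr w R X = ∑ l ∈ perms R with (l.take X.card).toFinset = X, listProb w l :=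
    (sum_filter _ _).symm
  rw [hfilter, sum_perms_filter_take hX]
  refine sum_congr rfl fun p _ => ?_
  calc ∑ m ∈ perms (R \ X), listProb w (p ++ m)
      = ∑ m ∈ perms (R \ X), prefixProb w (∑ j ∈ R \ X, w j) p * listProb w m :=
        sum_congr rfl fun m hm => by rw [listProb_append, sum_map_eq_sum_of_mem_perms w hm]
    _ = prefixProb w (∑ j ∈ R \ X, w j) p := by
        rw [← mul_sum, sum_listProb w fun i hi => hw i (mem_sdiff.1 hi).1, mul_one]

theorem urnPr_empty {w : ι → ℝ} {R : Finset ι} (hw : ∀ i ∈ R, 0 < w i) : urnPr w R ∅ = 1 := by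
  rw [urnPr_eq_sum_prefixProb hw (empty_subset R), perms_empty, sum_singleton, prefixProb]

/-- The probability that the urn process passes through `X` and draws `i` right after. -/
noncomputable def transProb (w : ι → ℝ) (R X : Finset ι) (i : ι) : ℝ :=
  w i * urnPr w R X / ∑ j ∈ R \ X, w j

theorem sum_transProb_sdiff {w : ι → ℝ} {R X : Finset ι} (hw : ∀ i ∈ R, 0 < w i)
    (hX : X ⊂ R) : ∑ i ∈ R \ X, transProb w R X i = urnPr w R X := by
  have hpos : 0 < ∑ j ∈ R \ X, w j :=
    sum_pos (fun i hi => hw i (mem_sdiff.1 hi).1) (sdiff_nonempty.2 (not_subset_of_ssubset hX))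
  unfold transProb
  rw [← sum_div, ← sum_mul, mul_div_right_comm, div_self hpos.ne', one_mul]

theorem sum_transProb_erase {w : ι → ℝ} {R Y : Finset ι} (hw : ∀ i ∈ R, 0 < w i) (hY : Y ⊆ R)
    (hne : Y.Nonempty) : ∑ i ∈ Y, transProb w R (Y.erase i) i = urnPr w R Y := by
  rw [urnPr_eq_sum_prefixProb hw hY, sum_perms_eq_sum_concat hne]
  refine sum_congr rfl fun i hi => ?_
  have hiY : i ∉ R \ Y := fun h => (mem_sdiff.1 h).2 hi
  rw [transProb, urnPr_eq_sum_prefixProb hw ((erase_subset i Y).trans hY), sdiff_erase (hY hi),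
    sum_insert hiY]
  simp_rw [prefixProb_concat]
  rw [← sum_mul]
  ring

/-- the total probability of leaving the order ideal `I` is 1. -/
theorem sum_exit_ideal_eq_one
    (w : ι → ℝ) (R : Finset ι) (hw : ∀ i ∈ R, 0 < w i)
    (I : Finset (Finset ι)) (hIsub : ∀ X ∈ I, X ⊆ R)
    (hIdeal : ∀ X ∈ I, ∀ Y, Y ⊆ X → Y ∈ I)
    (hbot : ∅ ∈ I) (htop : R ∉ I) :
    ∑ X ∈ I, ∑ i ∈ (R \ X).filter (fun i => insert i X ∉ I),
        w i * urnPr w R X / ∑ j ∈ R \ X, w j = 1 := by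
  have hssub : ∀ X ∈ I, X ⊂ R := fun X hX =>
    (hIsub X hX).ssubset_of_ne fun h => htop (h ▸ hX)
  rw [← urnPr_empty hw]
  exact sum_exit_eq_of_flow_conservation (f := transProb w R) hIsub hIdeal hbot
    (fun X hX => sum_transProb_sdiff hw (hssub X hX))
    (fun Y hY hne => sum_transProb_erase hw (hIsub Y hY) hne)
end

section
/- Let Z be a set of sites in an m×n grid and k a positive integer. Let I_k(Z) be the family of sets of rows that are subsets of some cover of Z by at most k−1 files, and let r(Z) be the set of rows in the row-maximal optimal cover of Z. Then X ∈ I_k(Z) if and only if X ∪ r(Z) ∈ I_k(Z). -/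
open Finset

variable {m n : ℕ}

/-- `X` is a set of rows which is a partial `(k-1)`-cover of `Z`: it is
contained in a cover of `Z` by at most `k - 1` files. -/
def InIk (k : ℕ) (Z : Finset (Fin m × Fin n)) (X : Finset (Fin m)) : Prop :=
  ∃ (A : Finset (Fin m)) (B : Finset (Fin n)),
    X ⊆ A ∧ Covers A B Z ∧ A.card + B.card ≤ k - 1

/-- `(A, B)` is the row-maximal optimal cover of `Z`. -/
def RowMaxOptCover (Z : Finset (Fin m × Fin n))
    (A : Finset (Fin m)) (B : Finset (Fin n)) : Prop :=
  IsOptCover Z A B ∧ ∀ (i : Fin m) (A' : Finset (Fin m)) (B' : Finset (Fin n)),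
    IsOptCover Z A' B' → i ∈ A' → i ∈ A

/-- `X ∈ I_k(Z)` if and only if `X ∪ r(Z) ∈ I_k(Z)`, where
`r(Z)` is the set of rows of the row-maximal optimal cover of `Z`. -/
theorem mem_Ik_iff_union_rowMax_mem_Ik
    (k : ℕ) (hk : 1 ≤ k) (Z : Finset (Fin m × Fin n))
    (A₀ : Finset (Fin m)) (B₀ : Finset (Fin n)) (hRM : RowMaxOptCover Z A₀ B₀)
    (X : Finset (Fin m)) :
    InIk k Z X ↔ InIk k Z (X ∪ A₀) := by
  constructor
  · rintro ⟨A, B, hXA, hcov, hcard⟩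
    refine ⟨A ∪ A₀, B ∩ B₀, union_subset_union_left hXA, ?_, ?_⟩
    · intro p hp
      rcases hcov p hp with h | h
      · exact Or.inl (mem_union_left _ h)
      · rcases hRM.1.1 p hp with h' | h'
        · exact Or.inl (mem_union_right _ h')
        · exact Or.inr (mem_inter.2 ⟨h, h'⟩)
    · have hcov' : Covers (A ∩ A₀) (B ∪ B₀) Z := by
        intro p hp
        by_cases hA : p.1 ∈ A ∩ A₀
        · exact Or.inl hA
        · rcases mem_inter.not.mp hA with _
          by_cases h1 : p.1 ∈ A
          · have h2 : p.1 ∉ A₀ := fun h => hA (mem_inter.2 ⟨h1, h⟩)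
            rcases hRM.1.1 p hp with h' | h'
            · exact absurd h' h2
            · exact Or.inr (mem_union_right _ h')
          · rcases hcov p hp with h' | h'
            · exact absurd h' h1
            · exact Or.inr (mem_union_left _ h')
      have hopt := hRM.1.2 (A ∩ A₀) (B ∪ B₀) hcov'
      have e1 : (A ∪ A₀).card + (A ∩ A₀).card = A.card + A₀.card :=
        card_union_add_card_inter A A₀
      have e2 : (B ∩ B₀).card + (B ∪ B₀).card = B.card + B₀.card :=
        card_inter_add_card_union B B₀
      omega
  · rintro ⟨A, B, hXA, hcov, hcard⟩
    exact ⟨A, B, subset_union_left.trans hXA, hcov, hcard⟩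
end

section
/- Let Z be a set of sites and (i,j) a site with rank(Z ∪ {(i,j)}) = rank(Z) + 1. Then I_k(Z ∪ {(i,j)}) = I_k(Z)/i, where I/i = {X : X ∪ {i} ∈ I}. -/
open Finset

variable {m n : ℕ}

/-
Every cover of `Z ∪ {(i,j)}` has at least `r + 1` files, since that set contains an independent
set of size `r + 1`. By König's theorem `Z` has a cover by `r` files; adding row `i` turns it into
a cover `(C, D)` of `Z ∪ {(i,j)}` by `r + 1` files with `i ∈ C`. Covers of a fixed set are closed
under the uncrossing `(A, B), (C, D) ↦ (A ∪ C, B ∩ D), (A ∩ C, B ∪ D)`, which preserves the total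
size. Since `(A ∩ C, B ∪ D)` has at least `r + 1` files, `(A ∪ C, B ∩ D)` is no larger than
`(A, B)`, and its rows contain `A ∪ {i}`.
-/

section Covers

variable {Z Z' : Finset (Fin m × Fin n)} {A C : Finset (Fin m)} {B D : Finset (Fin n)}

theorem Covers.mono_s18 (h : Covers A B Z) (hZ : Z' ⊆ Z) : Covers A B Z' :=
  fun p hp => h p (hZ hp)

theorem Covers.mono_rows (h : Covers A B Z) (hAC : A ⊆ C) : Covers C B Z :=
  fun p hp => (h p hp).imp_left (@hAC _)

theorem Covers.insert_of_mem {i : Fin m} (h : Covers A B Z) (hi : i ∈ A) (j : Fin n) :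
    Covers A B (insert (i, j) Z) := by
  intro p hp
  rcases mem_insert.mp hp with rfl | hp
  · exact .inl hi
  · exact h p hp

theorem Covers.insert_row (h : Covers A B Z) (i : Fin m) (j : Fin n) :
    Covers (insert i A) B (insert (i, j) Z) :=
  (h.mono_rows (subset_insert i A)).insert_of_mem (mem_insert_self i A) j

theorem Covers.union_inter (h₁ : Covers A B Z) (h₂ : Covers C D Z) :
    Covers (A ∪ C) (B ∩ D) Z := by
  intro p hp
  simp only [mem_union, mem_inter]
  have := h₁ p hp
  have := h₂ p hp
  tauto

theorem Covers.inter_union (h₁ : Covers A B Z) (h₂ : Covers C D Z) :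
    Covers (A ∩ C) (B ∪ D) Z := by
  intro p hp
  simp only [mem_union, mem_inter]
  have := h₁ p hp
  have := h₂ p hp
  tauto

end Covers

theorem Indep.card_le_card_add_card_of_covers {Z μ : Finset (Fin m × Fin n)}
    {A : Finset (Fin m)} {B : Finset (Fin n)} (hμ : Indep μ) (hμZ : μ ⊆ Z)
    (hcov : Covers A B Z) : #μ ≤ #A + #B := by
  rw [← card_disjSum A B]
  refine card_le_card_of_injOn (fun p => if p.1 ∈ A then .inl p.1 else .inr p.2) ?_ ?_
  · intro p hp
    by_cases h : p.1 ∈ A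
    · simp [h]
    · simp [h, (hcov p (hμZ hp)).resolve_left h]
  · intro p hp q hq hpq
    by_contra hne
    obtain ⟨h₁, h₂⟩ := hμ p hp q hq hne
    by_cases ha : p.1 ∈ A <;> by_cases hb : q.1 ∈ A <;> simp [ha, hb] at hpq
    · exact h₁ hpq
    · exact h₂ hpq

def adjCols (Z : Finset (Fin m × Fin n)) (S : Finset (Fin m)) : Finset (Fin n) :=
  (Z.filter (·.1 ∈ S)).image Prod.snd

theorem mem_adjCols {Z : Finset (Fin m × Fin n)} {S : Finset (Fin m)} {c : Fin n} :
    c ∈ adjCols Z S ↔ ∃ x ∈ S, (x, c) ∈ Z := by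
  simp only [adjCols, mem_image, mem_filter, Prod.exists]
  aesop

theorem covers_compl_adjCols (Z : Finset (Fin m × Fin n)) (S : Finset (Fin m)) :
    Covers Sᶜ (adjCols Z S) Z := by
  intro p hp
  by_cases h : p.1 ∈ S
  · exact .inr (mem_adjCols.mpr ⟨p.1, h, hp⟩)
  · exact .inl (mem_compl.mpr h)

theorem exists_indep_card_add_ge_of_card_le_adjCols_add {Z : Finset (Fin m × Fin n)} {d : ℕ}
    (hHall : ∀ S : Finset (Fin m), #S ≤ #(adjCols Z S) + d) :
    ∃ μ ⊆ Z, Indep μ ∧ m ≤ #μ + d := by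
  -- `d` dummy columns, adjacent to every row, make Hall's condition hold.
  set t : Fin m → Finset (Fin n ⊕ Fin d) := fun x => (adjCols Z {x}).disjSum univ
  have hHall' : ∀ s : Finset (Fin m), #s ≤ #(s.biUnion t) := by
    intro s
    rcases s.eq_empty_or_nonempty with rfl | ⟨x₀, hx₀⟩
    · simp
    have hsub : (adjCols Z s).disjSum univ ⊆ s.biUnion t := by
      intro y hy
      rcases mem_disjSum.mp hy with ⟨c, hc, rfl⟩ | ⟨b, -, rfl⟩
      · obtain ⟨x, hx, hxc⟩ := mem_adjCols.mp hc
        exact mem_biUnion.mpr ⟨x, hx, inl_mem_disjSum.mpr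
          (mem_adjCols.mpr ⟨x, mem_singleton_self x, hxc⟩)⟩
      · exact mem_biUnion.mpr ⟨x₀, hx₀, inr_mem_disjSum.mpr (mem_univ b)⟩
    calc #s ≤ #(adjCols Z s) + d := hHall s
      _ = #((adjCols Z s).disjSum univ) := by simp [card_disjSum]
      _ ≤ #(s.biUnion t) := card_le_card hsub
  obtain ⟨g, hg_inj, hg⟩ := (all_card_le_biUnion_card_iff_exists_injective t).mp hHall'
  refine ⟨Z.filter (fun p => g p.1 = .inl p.2), filter_subset _ _, ?_, ?_⟩
  · intro p hp q hq hne
    have hp' := (mem_filter.mp hp).2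
    have hq' := (mem_filter.mp hq).2
    refine ⟨fun h₁ => hne (Prod.ext h₁ ?_), fun h₂ => hne (Prod.ext ?_ h₂)⟩
    · exact Sum.inl_injective (hp'.symm.trans (h₁ ▸ hq'))
    · exact hg_inj (hp'.trans (h₂ ▸ hq'.symm))
  · set μ := Z.filter (fun p => g p.1 = .inl p.2)
    have hunmatched : ∀ x ∈ (μ.image Prod.fst)ᶜ, g x ∈ univ.image (Sum.inr : Fin d → _) := by
      intro x hx
      rcases hgx : g x with c | b
      · have hc := hgx ▸ hg x
        obtain ⟨_, hx', hxc⟩ := mem_adjCols.mp (inl_mem_disjSum.mp hc)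
        rw [mem_singleton.mp hx'] at hxc
        exact absurd (mem_image_of_mem Prod.fst (mem_filter.mpr ⟨hxc, hgx⟩)) (mem_compl.mp hx)
      · exact mem_image_of_mem _ (mem_univ b)
    have hcompl := card_le_card_of_injOn g hunmatched hg_inj.injOn
    rw [card_compl, Fintype.card_fin, card_image_of_injective _ Sum.inr_injective,
      card_univ, Fintype.card_fin] at hcompl
    have := card_image_le (s := μ) (f := Prod.fst)
    omega

theorem exists_covers_card_le_of_isRank {Z : Finset (Fin m × Fin n)} {r : ℕ} (hr : IsRank Z r) :
    ∃ (A : Finset (Fin m)) (B : Finset (Fin n)), Covers A B Z ∧ #A + #B ≤ r := by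
  -- A row set of maximal deficiency yields both a cover and, by Hall, a matching of the same size.
  obtain ⟨S₀, -, hS₀⟩ := exists_max_image univ (fun S => (#S : ℤ) - #(adjCols Z S)) univ_nonempty
  have hpos : #(adjCols Z S₀) ≤ #S₀ := by simpa [adjCols] using hS₀ ∅ (mem_univ _)
  obtain ⟨μ, hμZ, hμ, hμcard⟩ := exists_indep_card_add_ge_of_card_le_adjCols_add
    (Z := Z) (d := #S₀ - #(adjCols Z S₀)) fun S => by have := hS₀ S (mem_univ _); omega
  refine ⟨S₀ᶜ, adjCols Z S₀, covers_compl_adjCols Z S₀, ?_⟩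
  have := hr.2 μ hμZ hμ
  have := card_le_univ S₀
  rw [Fintype.card_fin] at this
  rw [card_compl, Fintype.card_fin]
  omega

theorem Ik_insert_eq_Ik_quotient_general
    (k : ℕ) (Z : Finset (Fin m × Fin n)) (i : Fin m) (j : Fin n)
    (r : ℕ) (hr : IsRank Z r) (hr' : IsRank (insert (i, j) Z) (r + 1)) :
    ∀ X : Finset (Fin m), InIk k (insert (i, j) Z) X ↔ InIk k Z (insert i X) := by
  intro X
  constructor
  · rintro ⟨A, B, hXA, hcov, hcard⟩
    obtain ⟨C₀, D, hcov₀, hcard₀⟩ := exists_covers_card_le_of_isRank hr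
    obtain ⟨μ, hμZ, hμ, hμcard⟩ := hr'.1
    have hcovC := hcov₀.insert_row i j
    have hlower := hμ.card_le_card_add_card_of_covers hμZ (hcov.inter_union hcovC)
    refine ⟨A ∪ insert i C₀, B ∩ D, insert_subset (mem_union_right _ (mem_insert_self i C₀))
      (hXA.trans subset_union_left), (hcov.union_inter hcovC).mono_s18 (subset_insert _ _), ?_⟩
    have := card_union_add_card_inter A (insert i C₀)
    have := card_union_add_card_inter B D
    have := card_insert_le i C₀
    omega
  · rintro ⟨A, B, hXA, hcov, hcard⟩
    exact ⟨A, B, (subset_insert i X).trans hXA,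
      hcov.insert_of_mem (hXA (mem_insert_self i X)) j, hcard⟩

/-- if `rank(Z ∪ {(i,j)}) = rank Z + 1`, then
`I_k(Z ∪ {(i,j)}) = I_k(Z)/i`, i.e. `X ∈ I_k(Z ∪ {(i,j)}) ↔ X ∪ {i} ∈ I_k(Z)`. -/
theorem Ik_insert_eq_Ik_quotient
    (k : ℕ) (hk : 1 ≤ k) (Z : Finset (Fin m × Fin n)) (i : Fin m) (j : Fin n)
    (r : ℕ) (hr : IsRank Z r) (hr' : IsRank (insert (i, j) Z) (r + 1)) :
    ∀ X : Finset (Fin m), InIk k (insert (i, j) Z) X ↔ InIk k Z (insert i X) :=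
  Ik_insert_eq_Ik_quotient_general k Z i j r hr hr'
end
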